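/- arXiv:1905.09631 — 6 statements merged into one kernel-verified Lean document; each statement's English description precedes it below -/
import Mathlib

section
/- Let T>0, H∈(0,1), p≥1 and m∈ℕ, m≥1. Then for every κ>0 there exists a constant C(κ)>0 depending only on T, m, H, p and κ such that for all nonnegative reals a₁,…,a_m: (∫_{0<u₁<⋯<u_m<T} exp(−(κ/2)·Σ_{j=1}^m a_j (u_j−u_{j−1})^{2H}) du)^p ≤ C(κ)^m · ∫_{0<u₁<⋯<u_m<T} exp(−(κ/2)·Σ_{j=1}^m a_j (u_j−u_{j−1})^{2H/p}) du, with the convention u₀=0. -/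
open MeasureTheory

noncomputable section

/-- The open simplex `{0 < u₁ < u₂ < ⋯ < u_m < T}` in `ℝ^m`. -/
def simplexLt (m : ℕ) (T : ℝ) : Set (Fin m → ℝ) :=
  {u | (∀ j, 0 < u j) ∧ (∀ j l : Fin m, j < l → u j < u l) ∧ ∀ j, u j < T}

/-- The increment `Δu_j = u_j − u_{j−1}`, with the convention `u₀ = 0`. -/
def simplexDelta {m : ℕ} (u : Fin m → ℝ) (j : Fin m) : ℝ :=
  u j - if _ : (j : ℕ) = 0 then 0
        else u ⟨(j : ℕ) - 1, Nat.lt_of_le_of_lt (Nat.sub_le _ _) j.isLt⟩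

open Real Set



lemma integrableOn_exp_neg_rpow1 {α : ℝ} (hα : 0 < α) :
    IntegrableOn (fun x : ℝ => Real.exp (-x ^ α)) (Ioi 0) := by
  have h := (integrableOn_Ioi_comp_rpow_iff'
      (fun y : ℝ => Real.exp (-y) * y ^ (1/α - 1)) hα.ne').mpr
      (Real.GammaIntegral_convergent (by positivity : (0:ℝ) < 1/α))
  refine h.congr_fun (fun x hx => ?_) measurableSet_Ioi
  have hx0 : (0:ℝ) < x := hx
  dsimp only
  rw [smul_eq_mul, ← Real.rpow_mul hx0.le, mul_comm (rexp _), ← mul_assoc,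
    ← Real.rpow_add hx0]
  have : α - 1 + α * (1/α - 1) = 0 := by field_simp; ring
  rw [this, Real.rpow_zero, one_mul]

lemma integrableOn_exp_neg_mul_rpow1 {α b : ℝ} (hα : 0 < α) (hb : 0 < b) :
    IntegrableOn (fun x : ℝ => Real.exp (-b * x ^ α)) (Ioi 0) := by
  have hk : (0:ℝ) < b ^ (1/α) := rpow_pos_of_pos hb _
  have h := (integrableOn_Ioi_comp_mul_left_iff
      (fun x : ℝ => Real.exp (-x ^ α)) 0 hk).mpr
      (by simpa using integrableOn_exp_neg_rpow1 hα)
  refine h.congr_fun (fun x hx => ?_) measurableSet_Ioi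
  have hx0 : (0:ℝ) < x := hx
  dsimp only
  rw [Real.mul_rpow hk.le hx0.le, ← Real.rpow_mul hb.le, one_div,
    inv_mul_cancel₀ hα.ne', Real.rpow_one, neg_mul]

lemma measurable_exp_neg_mul_rpow (b γ : ℝ) :
    Measurable (fun x : ℝ => Real.exp (-b * x ^ γ)) :=
  (((measurable_id.pow (measurable_const : Measurable fun _ : ℝ => γ)).const_mul (-b)).exp)

lemma integrableOn_Ioo_exp_neg_mul_rpow {b γ : ℝ} (hb : 0 ≤ b) (R : ℝ) :
    IntegrableOn (fun x : ℝ => Real.exp (-b * x ^ γ)) (Ioo 0 R) := by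
  refine Measure.integrableOn_of_bounded (M := 1) ?_ (measurable_exp_neg_mul_rpow b γ).aestronglyMeasurable ?_
  · simp [Real.volume_Ioo]
  · filter_upwards [ae_restrict_mem measurableSet_Ioo] with x hx
    rw [Real.norm_eq_abs, abs_of_nonneg (Real.exp_pos _).le, Real.exp_le_one_iff]
    have : 0 ≤ x ^ γ := Real.rpow_nonneg hx.1.le γ
    nlinarith

/-- Upper bound on `F(b)`. -/
lemma F_le {α b T : ℝ} (hα : 0 < α) (hb : 0 < b) (hT : 0 < T) :
    ∫ x in Ioo (0:ℝ) T, Real.exp (-b * x ^ α)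
      ≤ b ^ (-1/α) * Real.Gamma (1/α + 1) := by
  rw [← integral_exp_neg_mul_rpow hα hb]
  refine setIntegral_mono_set (integrableOn_exp_neg_mul_rpow1 hα hb) ?_ ?_
  · filter_upwards with x using (Real.exp_pos _).le
  · filter_upwards with x hx using hx.1

/-- Lower bound on `G(b)`. -/
lemma G_ge {β b r R : ℝ} (hβ : 0 < β) (hb : 0 ≤ b) (hr : 0 < r) (hrR : r ≤ R) :
    r * Real.exp (-b * r ^ β) ≤ ∫ x in Ioo (0:ℝ) R, Real.exp (-b * x ^ β) := by
  have h1 : r * Real.exp (-b * r ^ β) ≤ ∫ x in Ioo (0:ℝ) r, Real.exp (-b * x ^ β) := by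
    have : ∫ (_ : ℝ) in Ioo (0:ℝ) r, Real.exp (-b * r ^ β)
        = r * Real.exp (-b * r ^ β) := by
      rw [setIntegral_const, measureReal_def, Real.volume_Ioo, smul_eq_mul, sub_zero,
        ENNReal.toReal_ofReal hr.le]
    rw [← this]
    refine setIntegral_mono_on (integrableOn_const (by simp [Real.volume_Ioo]))
      (integrableOn_Ioo_exp_neg_mul_rpow hb r) measurableSet_Ioo (fun x hx => ?_)
    apply Real.exp_le_exp.2
    have hxr : x ^ β ≤ r ^ β := Real.rpow_le_rpow hx.1.le hx.2.le hβ.le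
    nlinarith
  refine h1.trans (setIntegral_mono_set (integrableOn_Ioo_exp_neg_mul_rpow hb R) ?_ ?_)
  · filter_upwards with x using (Real.exp_pos _).le
  · filter_upwards with x hx using ⟨hx.1, lt_of_lt_of_le hx.2 hrR⟩

set_option maxHeartbeats 1000000 in
/-- The one-dimensional comparison lemma. -/
lemma oneDim {T R c α β p : ℝ} (hT : 0 < T) (hR : 0 < R) (hc : 0 < c)
    (hα : 0 < α) (hβ : 0 < β) (hp : 1 ≤ p) (hαβ : α = β * p) :
    ∃ C : ℝ, 0 < C ∧ ∀ b : ℝ, 0 ≤ b →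
      (∫ x in Ioo (0:ℝ) T, Real.exp (-(c*b) * x ^ α)) ^ p
        ≤ C * ∫ x in Ioo (0:ℝ) R, Real.exp (-(c*b) * x ^ β) := by
  have hp0 : (0:ℝ) < p := lt_of_lt_of_le one_pos hp
  set b₀ : ℝ := T ^ (-α) with hb₀def
  have hb₀ : 0 < b₀ := rpow_pos_of_pos hT _
  set Γ : ℝ := Real.Gamma (1/α + 1) with hΓdef
  have hΓ : 0 < Γ := Real.Gamma_pos_of_pos (by positivity)
  set E : ℝ := Real.exp (c * b₀ * R ^ β) with hEdef
  have hE : 0 < E := Real.exp_pos _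
  set C₁ : ℝ := T ^ p * E / R with hC₁def
  have hC₁ : 0 < C₁ := by positivity
  set C₂ : ℝ := c ^ (-(1/β)) * Γ ^ p * E / (R * b₀ ^ (1/β)) with hC₂def
  have hC₂ : 0 < C₂ := by positivity
  refine ⟨C₁ + C₂, by positivity, fun b hb => ?_⟩
  have hFnonneg : 0 ≤ ∫ x in Ioo (0:ℝ) T, Real.exp (-(c*b) * x ^ α) :=
    setIntegral_nonneg measurableSet_Ioo (fun x _ => (Real.exp_pos _).le)
  have hGnonneg : 0 ≤ ∫ x in Ioo (0:ℝ) R, Real.exp (-(c*b) * x ^ β) :=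
    setIntegral_nonneg measurableSet_Ioo (fun x _ => (Real.exp_pos _).le)
  have hcb : 0 ≤ c * b := by positivity
  rcases le_or_gt b b₀ with hble | hbgt
  · -- small b : F ≤ T, G ≥ R * exp(-c b R^β) ≥ R * E⁻¹
    have hF : (∫ x in Ioo (0:ℝ) T, Real.exp (-(c*b) * x ^ α)) ≤ T := by
      calc (∫ x in Ioo (0:ℝ) T, Real.exp (-(c*b) * x ^ α))
          ≤ ∫ _ in Ioo (0:ℝ) T, 1 := by
            refine setIntegral_mono_on (integrableOn_Ioo_exp_neg_mul_rpow hcb T)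
              (integrableOn_const (by simp [Real.volume_Ioo])) measurableSet_Ioo
              (fun x hx => ?_)
            rw [Real.exp_le_one_iff]
            have : 0 ≤ x ^ α := Real.rpow_nonneg hx.1.le α
            nlinarith
        _ = T := by
            rw [setIntegral_const, measureReal_def, Real.volume_Ioo, smul_eq_mul, sub_zero,
              ENNReal.toReal_ofReal hT.le, mul_one]
    have hFp : (∫ x in Ioo (0:ℝ) T, Real.exp (-(c*b) * x ^ α)) ^ p ≤ T ^ p :=
      Real.rpow_le_rpow hFnonneg hF hp0.le
    have hG : R * Real.exp (-(c*b) * R ^ β)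
        ≤ ∫ x in Ioo (0:ℝ) R, Real.exp (-(c*b) * x ^ β) := G_ge hβ hcb hR le_rfl
    have hGE : R / E ≤ ∫ x in Ioo (0:ℝ) R, Real.exp (-(c*b) * x ^ β) := by
      refine le_trans ?_ hG
      have hmono : Real.exp (-(c*b₀) * R ^ β) ≤ Real.exp (-(c*b) * R ^ β) := by
        apply Real.exp_le_exp.2
        have hRβ : 0 ≤ R ^ β := Real.rpow_nonneg hR.le β
        nlinarith [mul_nonneg (mul_nonneg hc.le (sub_nonneg.2 hble)) hRβ]
      have hEq : R / E = R * Real.exp (-(c*b₀) * R ^ β) := by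
        rw [hEdef, neg_mul, Real.exp_neg, div_eq_mul_inv]
      rw [hEq]
      nlinarith
    calc (∫ x in Ioo (0:ℝ) T, Real.exp (-(c*b) * x ^ α)) ^ p ≤ T ^ p := hFp
      _ = C₁ * (R / E) := by rw [hC₁def]; field_simp
      _ ≤ C₁ * ∫ x in Ioo (0:ℝ) R, Real.exp (-(c*b) * x ^ β) := by
          exact mul_le_mul_of_nonneg_left hGE hC₁.le
      _ ≤ (C₁ + C₂) * ∫ x in Ioo (0:ℝ) R, Real.exp (-(c*b) * x ^ β) := by nlinarith
  · -- large b
    have hbpos : 0 < b := hb₀.trans hbgt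
    have hcbpos : 0 < c * b := by positivity
    have h1β : -1/α * p = -(1/β) := by
      rw [hαβ]; field_simp
    have hF := F_le hα hcbpos hT
    have hFp := Real.rpow_le_rpow hFnonneg hF hp0.le
    have hQ : ((c*b) ^ (-1/α) * Γ) ^ p = c ^ (-(1/β)) * b ^ (-(1/β)) * Γ ^ p := by
      rw [Real.mul_rpow (Real.rpow_nonneg hcbpos.le _) hΓ.le, ← Real.rpow_mul hcbpos.le,
        h1β, Real.mul_rpow hc.le hbpos.le]
    set r : ℝ := R * (b₀/b) ^ (1/β) with hrdef
    have hrpos : 0 < r := by positivity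
    have hrR : r ≤ R := by
      have h1 : (b₀/b) ^ (1/β) ≤ 1 :=
        Real.rpow_le_one (by positivity) (by rw [div_le_one hbpos]; exact hbgt.le)
          (by positivity)
      nlinarith
    have hG := G_ge hβ hcbpos.le hrpos hrR
    have hrβ : -(c*b) * r ^ β = -(c * b₀ * R ^ β) := by
      rw [hrdef, Real.mul_rpow hR.le (Real.rpow_nonneg (by positivity) _),
        ← Real.rpow_mul (by positivity : (0:ℝ) ≤ b₀/b), one_div_mul_cancel hβ.ne',
        Real.rpow_one]
      field_simp
    have hGfinal : C₂ * (r * Real.exp (-(c*b) * r ^ β))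
        = c ^ (-(1/β)) * b ^ (-(1/β)) * Γ ^ p := by
      rw [hrβ, hC₂def, hEdef, hrdef,
        Real.div_rpow hb₀.le hbpos.le, Real.rpow_neg hbpos.le (1/β)]
      have hb1 : (0:ℝ) < b ^ (1/β) := Real.rpow_pos_of_pos hbpos _
      have hb2 : (0:ℝ) < b₀ ^ (1/β) := Real.rpow_pos_of_pos hb₀ _
      have hE' : Real.exp (c * b₀ * R ^ β) ≠ 0 := (Real.exp_pos _).ne'
      rw [Real.exp_neg]
      field_simp
    calc (∫ x in Ioo (0:ℝ) T, Real.exp (-(c*b) * x ^ α)) ^ p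
        ≤ ((c*b) ^ (-1/α) * Γ) ^ p := hFp
      _ = C₂ * (r * Real.exp (-(c*b) * r ^ β)) := by rw [hQ, hGfinal]
      _ ≤ C₂ * ∫ x in Ioo (0:ℝ) R, Real.exp (-(c*b) * x ^ β) :=
          mul_le_mul_of_nonneg_left hG hC₂.le
      _ ≤ (C₁ + C₂) * ∫ x in Ioo (0:ℝ) R, Real.exp (-(c*b) * x ^ β) := by nlinarith




/-- The partial-sum linear map. -/
def sumMap (m : ℕ) : (Fin m → ℝ) →ₗ[ℝ] (Fin m → ℝ) where
  toFun s := fun j => ∑ i ∈ Finset.Iic j, s i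
  map_add' s t := by funext j; simp [Finset.sum_add_distrib]
  map_smul' c s := by funext j; simp [Finset.mul_sum]

@[simp] lemma sumMap_apply {m : ℕ} (s : Fin m → ℝ) (j : Fin m) :
    sumMap m s j = ∑ i ∈ Finset.Iic j, s i := rfl

lemma Iic_eq_insert {m : ℕ} (k : ℕ) (hk : k + 1 < m) :
    Finset.Iic (⟨k+1, hk⟩ : Fin m)
      = insert (⟨k+1, hk⟩ : Fin m) (Finset.Iic ⟨k, Nat.lt_of_succ_lt hk⟩) := by
  ext i
  simp only [Finset.mem_Iic, Finset.mem_insert, Fin.le_def, Fin.ext_iff]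
  omega

lemma Iic_zero {m : ℕ} (j : Fin m) (hj : (j : ℕ) = 0) :
    Finset.Iic j = {j} := by
  ext i
  simp only [Finset.mem_Iic, Finset.mem_singleton, Fin.le_def, Fin.ext_iff, hj]
  omega

lemma simplexDelta_sumMap {m : ℕ} (s : Fin m → ℝ) (j : Fin m) :
    simplexDelta (sumMap m s) j = s j := by
  unfold simplexDelta
  rcases Nat.eq_zero_or_eq_succ_pred (j : ℕ) with h0 | hsucc
  · rw [dif_pos h0, sumMap_apply, Iic_zero j h0, Finset.sum_singleton, sub_zero]
  · have hj0 : (j : ℕ) ≠ 0 := by omega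
    rw [dif_neg hj0]
    obtain ⟨k, hk⟩ : ∃ k, (j : ℕ) = k + 1 := ⟨(j:ℕ) - 1, by omega⟩
    have hkm : k + 1 < m := hk ▸ j.isLt
    have hjeq : j = ⟨k+1, hkm⟩ := Fin.ext hk
    subst hjeq
    have hidx : (⟨((⟨k+1, hkm⟩ : Fin m) : ℕ) - 1,
        Nat.lt_of_le_of_lt (Nat.sub_le _ _) (Fin.isLt _)⟩ : Fin m)
        = ⟨k, Nat.lt_of_succ_lt hkm⟩ := by
      apply Fin.ext; simp
    rw [sumMap_apply, sumMap_apply, hidx, Iic_eq_insert k hkm,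
      Finset.sum_insert (by simp [Finset.mem_Iic, Fin.le_def])]
    ring

lemma sum_simplexDelta_aux {m : ℕ} (u : Fin m → ℝ) :
    ∀ k (hk : k < m), ∑ i ∈ Finset.Iic (⟨k, hk⟩ : Fin m), simplexDelta u i = u ⟨k, hk⟩ := by
  intro k
  induction k with
  | zero =>
      intro hk
      rw [Iic_zero _ rfl, Finset.sum_singleton]
      unfold simplexDelta
      rw [dif_pos rfl, sub_zero]
  | succ n ih =>
      intro hk
      rw [Iic_eq_insert n hk, Finset.sum_insert (by simp [Finset.mem_Iic, Fin.le_def]),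
        ih (Nat.lt_of_succ_lt hk)]
      unfold simplexDelta
      rw [dif_neg (by simp)]
      have hidx : (⟨((⟨n+1, hk⟩ : Fin m) : ℕ) - 1,
          Nat.lt_of_le_of_lt (Nat.sub_le _ _) (Fin.isLt _)⟩ : Fin m)
          = ⟨n, Nat.lt_of_succ_lt hk⟩ := by
        apply Fin.ext; simp
      rw [hidx]
      ring

lemma sumMap_simplexDelta {m : ℕ} (u : Fin m → ℝ) :
    sumMap m (fun j => simplexDelta u j) = u := by
  funext j
  rw [sumMap_apply]
  have := sum_simplexDelta_aux u j.1 j.isLt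
  simpa using this

/-- The increment map as a linear map. -/
def deltaMap (m : ℕ) : (Fin m → ℝ) →ₗ[ℝ] (Fin m → ℝ) where
  toFun u := fun j => simplexDelta u j
  map_add' u v := by
    funext j
    by_cases h : (j:ℕ) = 0 <;> simp [simplexDelta, h] <;> ring
  map_smul' c u := by
    funext j
    by_cases h : (j:ℕ) = 0 <;> simp [simplexDelta, h] <;> ring

@[simp] lemma deltaMap_apply {m : ℕ} (u : Fin m → ℝ) (j : Fin m) :
    deltaMap m u j = simplexDelta u j := rfl

/-- The partial-sum linear equivalence. -/
def sumEquiv (m : ℕ) : (Fin m → ℝ) ≃ₗ[ℝ] (Fin m → ℝ) :=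
  LinearEquiv.ofLinear (sumMap m) (deltaMap m)
    (LinearMap.ext fun u => by
      have := sumMap_simplexDelta u
      simpa [deltaMap] using this)
    (LinearMap.ext fun s => by
      funext j
      simpa using simplexDelta_sumMap s j)

lemma det_sumMap (m : ℕ) : LinearMap.det (sumMap m) = 1 := by
  rw [← LinearMap.det_toMatrix' (sumMap m)]
  have hM : ∀ i j : Fin m, (LinearMap.toMatrix' (sumMap m)) i j
      = if j ≤ i then 1 else 0 := by
    intro i j
    rw [LinearMap.toMatrix'_apply, sumMap_apply]
    by_cases h : j ≤ i
    · rw [if_pos h]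
      rw [Finset.sum_eq_single j]
      · simp
      · intro b _ hbj; simp [hbj]
      · intro hj; exact absurd (Finset.mem_Iic.2 h) hj
    · rw [if_neg h]
      apply Finset.sum_eq_zero
      intro b hb
      have : b ≠ j := fun hbj => h (hbj ▸ Finset.mem_Iic.1 hb)
      simp [this]
  have htri : (LinearMap.toMatrix' (sumMap m)).BlockTriangular OrderDual.toDual := by
    intro i j hij
    rw [hM]
    exact if_neg (by exact fun h => absurd (lt_of_lt_of_le hij h) (lt_irrefl _))
  rw [Matrix.det_of_lowerTriangular _ htri]
  have : ∀ i : Fin m, (LinearMap.toMatrix' (sumMap m)) i i = 1 := fun i => by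
    rw [hM]; simp
  rw [Finset.prod_congr rfl (fun i _ => this i)]
  simp

/-- The increments region. -/
def incRegion (m : ℕ) (T : ℝ) : Set (Fin m → ℝ) :=
  {s | (∀ j, 0 < s j) ∧ ∑ j, s j < T}

lemma measurePreserving_sumMap (m : ℕ) :
    MeasurePreserving (⇑(sumMap m)) (volume : Measure (Fin m → ℝ)) volume := by
  refine ⟨(LinearMap.continuous_of_finiteDimensional (sumMap m)).measurable, ?_⟩
  rw [Real.map_linearMap_volume_pi_eq_smul_volume_pi (by rw [det_sumMap]; norm_num),
    det_sumMap]
  norm_num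

lemma measurableEmbedding_sumMap (m : ℕ) : MeasurableEmbedding (⇑(sumMap m)) := by
  have : ⇑(sumMap m) = ⇑((sumEquiv m).toContinuousLinearEquiv.toHomeomorph) := rfl
  rw [this]
  exact (sumEquiv m).toContinuousLinearEquiv.toHomeomorph.measurableEmbedding

lemma preimage_simplexLt (m : ℕ) (hm : 0 < m) (T : ℝ) :
    (⇑(sumMap m)) ⁻¹' (simplexLt m T) = incRegion m T := by
  ext s
  constructor
  · rintro ⟨h1, h2, h3⟩
    constructor
    · intro j
      rw [← simplexDelta_sumMap s j]
      unfold simplexDelta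
      by_cases hj : (j : ℕ) = 0
      · rw [dif_pos hj, sub_zero]; exact h1 j
      · rw [dif_neg hj, sub_pos]
        exact h2 _ _ (by simp [Fin.lt_def]; omega)
    · have huniv : (Finset.univ : Finset (Fin m))
          = Finset.Iic (⟨m-1, by omega⟩ : Fin m) := by
        ext i
        simp only [Finset.mem_univ, Finset.mem_Iic, Fin.le_def, true_iff]
        have := i.isLt; omega
      calc ∑ j, s j = sumMap m s ⟨m-1, by omega⟩ := by rw [sumMap_apply, huniv]
        _ < T := h3 _
  · rintro ⟨h1, h2⟩
    refine ⟨fun j => ?_, fun j l hjl => ?_, fun j => ?_⟩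
    · rw [sumMap_apply]
      exact Finset.sum_pos (fun i _ => h1 i) ⟨j, Finset.mem_Iic.2 le_rfl⟩
    · rw [sumMap_apply, sumMap_apply]
      refine Finset.sum_lt_sum_of_subset (Finset.Iic_subset_Iic.2 hjl.le)
        (Finset.mem_Iic.2 le_rfl) (by simpa [Finset.mem_Iic] using hjl) (h1 l)
        (fun i _ _ => (h1 i).le)
    · rw [sumMap_apply]
      calc ∑ i ∈ Finset.Iic j, s i ≤ ∑ i, s i :=
            Finset.sum_le_sum_of_subset_of_nonneg (Finset.subset_univ _)
              (fun i _ _ => (h1 i).le)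
        _ < T := h2

lemma measurableSet_incRegion (m : ℕ) (T : ℝ) : MeasurableSet (incRegion m T) := by
  have h1 : MeasurableSet {s : Fin m → ℝ | ∀ j, 0 < s j} := by
    have : {s : Fin m → ℝ | ∀ j, 0 < s j} = ⋂ j, {s | 0 < s j} := by
      ext; simp
    rw [this]
    exact MeasurableSet.iInter fun j =>
      measurableSet_lt measurable_const (measurable_pi_apply j)
  have h2 : MeasurableSet {s : Fin m → ℝ | ∑ j, s j < T} :=
    measurableSet_lt (Finset.univ.measurable_sum fun j _ => measurable_pi_apply j)
      measurable_const
  exact h1.inter h2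

/-- Fubini on a box. -/
lemma integral_box {m : ℕ} (R : ℝ) (f : Fin m → ℝ → ℝ) :
    ∫ s in Set.pi Set.univ (fun _ : Fin m => Ioo (0:ℝ) R), ∏ j, f j (s j)
      = ∏ j, ∫ x in Ioo (0:ℝ) R, f j x := by
  rw [← integral_indicator (MeasurableSet.univ_pi fun _ => measurableSet_Ioo)]
  have key : ∀ s : Fin m → ℝ,
      (Set.pi Set.univ fun _ : Fin m => Ioo (0:ℝ) R).indicator
        (fun s => ∏ j, f j (s j)) s
      = ∏ j, (Ioo (0:ℝ) R).indicator (f j) (s j) := by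
    intro s
    by_cases hs : s ∈ Set.pi Set.univ fun _ : Fin m => Ioo (0:ℝ) R
    · rw [Set.indicator_of_mem hs]
      exact Finset.prod_congr rfl fun j _ =>
        (Set.indicator_of_mem (hs j (Set.mem_univ j)) _).symm
    · rw [Set.indicator_of_notMem hs]
      rw [Set.mem_univ_pi] at hs
      push_neg at hs
      obtain ⟨j, hj⟩ := hs
      exact (Finset.prod_eq_zero (Finset.mem_univ j)
        (Set.indicator_of_notMem hj _)).symm
  simp_rw [key]
  rw [MeasureTheory.integral_fintype_prod_volume_eq_prod
    (f := fun j : Fin m => (Ioo (0:ℝ) R).indicator (f j))]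
  exact Finset.prod_congr rfl fun j _ => integral_indicator measurableSet_Ioo


lemma incRegion_subset_box (m : ℕ) (T : ℝ) :
    incRegion m T ⊆ Set.pi Set.univ (fun _ : Fin m => Ioo (0:ℝ) T) := by
  rintro s ⟨h1, h2⟩ j _
  refine ⟨h1 j, lt_of_le_of_lt ?_ h2⟩
  exact Finset.single_le_sum (fun i _ => (h1 i).le) (Finset.mem_univ j)

lemma box_subset_incRegion {m : ℕ} (hm : 0 < m) (T : ℝ) :
    Set.pi Set.univ (fun _ : Fin m => Ioo (0:ℝ) (T / m)) ⊆ incRegion m T := by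
  intro s hs
  have hmR : (0:ℝ) < (m:ℝ) := by exact_mod_cast hm
  refine ⟨fun j => (hs j (Set.mem_univ j)).1, ?_⟩
  have : Nonempty (Fin m) := ⟨⟨0, hm⟩⟩
  calc ∑ j, s j < ∑ _j : Fin m, T / m :=
        Finset.sum_lt_sum_of_nonempty Finset.univ_nonempty
          (fun j _ => (hs j (Set.mem_univ j)).2)
    _ = T := by
        rw [Finset.sum_const, Finset.card_univ, Fintype.card_fin, nsmul_eq_mul]
        field_simp

lemma volume_box_ne_top (m : ℕ) (R : ℝ) :
    volume (Set.pi Set.univ fun _ : Fin m => Ioo (0:ℝ) R) ≠ ⊤ := by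
  rw [volume_pi_pi]
  simp [Real.volume_Ioo]

lemma measurable_prodExp {m : ℕ} (b : Fin m → ℝ) (γ : ℝ) :
    Measurable (fun s : Fin m → ℝ => ∏ j, Real.exp (-(b j) * (s j) ^ γ)) :=
  Finset.measurable_prod _ fun j _ =>
    (measurable_exp_neg_mul_rpow (b j) γ).comp (measurable_pi_apply j)

lemma integrableOn_box_prodExp {m : ℕ} (b : Fin m → ℝ) (hb : ∀ j, 0 ≤ b j)
    (γ R : ℝ) :
    IntegrableOn (fun s : Fin m → ℝ => ∏ j, Real.exp (-(b j) * (s j) ^ γ))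
      (Set.pi Set.univ fun _ : Fin m => Ioo (0:ℝ) R) := by
  refine Measure.integrableOn_of_bounded (M := 1) (volume_box_ne_top m R)
    (measurable_prodExp b γ).aestronglyMeasurable ?_
  filter_upwards [ae_restrict_mem (MeasurableSet.univ_pi fun _ => measurableSet_Ioo)]
    with s hs
  rw [Real.norm_eq_abs, abs_of_nonneg (Finset.prod_nonneg fun j _ => (Real.exp_pos _).le)]
  refine Finset.prod_le_one (fun j _ => (Real.exp_pos _).le) (fun j _ => ?_)
  rw [Real.exp_le_one_iff]
  have h1 : 0 ≤ (s j) ^ γ := Real.rpow_nonneg (hs j (Set.mem_univ j)).1.le γ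
  nlinarith [hb j]

lemma simplex_integral_eq {m : ℕ} (hm : 0 < m) (T c γ : ℝ) (a : Fin m → ℝ) :
    ∫ u in simplexLt m T, Real.exp (-c * ∑ j, a j * (simplexDelta u j) ^ γ)
      = ∫ s in incRegion m T, ∏ j, Real.exp (-(c * a j) * (s j) ^ γ) := by
  have h := (measurePreserving_sumMap m).setIntegral_preimage_emb
    (measurableEmbedding_sumMap m)
    (fun u => Real.exp (-c * ∑ j, a j * (simplexDelta u j) ^ γ)) (simplexLt m T)
  rw [← h, preimage_simplexLt m hm T]
  refine setIntegral_congr_fun (measurableSet_incRegion m T) (fun s _ => ?_)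
  rw [← Real.exp_sum]
  congr 1
  rw [Finset.mul_sum]
  refine Finset.sum_congr rfl fun j _ => ?_
  rw [simplexDelta_sumMap]
  ring

theorem stmt8
    (T : ℝ) (hT : 0 < T) (H : ℝ) (hH : H ∈ Set.Ioo (0 : ℝ) 1)
    (p : ℝ) (hp : 1 ≤ p) (m : ℕ) (hm : 1 ≤ m) :
    ∀ κ : ℝ, 0 < κ → ∃ C : ℝ, 0 < C ∧
      ∀ a : Fin m → ℝ, (∀ j, 0 ≤ a j) →
      (∫ u in simplexLt m T,
          Real.exp (-(κ / 2) * ∑ j, a j * (simplexDelta u j) ^ (2 * H))) ^ p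
        ≤ C ^ m *
          ∫ u in simplexLt m T,
            Real.exp (-(κ / 2) * ∑ j, a j * (simplexDelta u j) ^ (2 * H / p)) := by
  obtain ⟨hH0, hH1⟩ := hH
  intro κ hκ
  have hm0 : 0 < m := hm
  have hp0 : (0:ℝ) < p := lt_of_lt_of_le one_pos hp
  have hmR : (0:ℝ) < (m:ℝ) := by exact_mod_cast hm0
  have hα : 0 < 2*H := by linarith
  have hβ : 0 < 2*H/p := by positivity
  have hαβ : 2*H = (2*H/p) * p := by field_simp
  have hc : 0 < κ/2 := by linarith
  obtain ⟨C, hC, hCall⟩ := oneDim (R := T/m) hT (div_pos hT hmR) hc hα hβ hp hαβ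
  refine ⟨C, hC, fun a ha => ?_⟩
  have hbnn : ∀ j, 0 ≤ κ/2 * a j := fun j => mul_nonneg (by linarith) (ha j)
  -- rewrite both sides over the increments region
  rw [simplex_integral_eq hm0 T (κ/2) (2*H) a, simplex_integral_eq hm0 T (κ/2) (2*H/p) a]
  set F : Fin m → ℝ :=
    fun j => ∫ x in Ioo (0:ℝ) T, Real.exp (-(κ/2 * a j) * x ^ (2*H)) with hFdef
  set G : Fin m → ℝ :=
    fun j => ∫ x in Ioo (0:ℝ) (T/m), Real.exp (-(κ/2 * a j) * x ^ (2*H/p)) with hGdef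
  have hFnn : ∀ j, 0 ≤ F j := fun j =>
    setIntegral_nonneg measurableSet_Ioo fun x _ => (Real.exp_pos _).le
  have hGnn : ∀ j, 0 ≤ G j := fun j =>
    setIntegral_nonneg measurableSet_Ioo fun x _ => (Real.exp_pos _).le
  -- upper bound for the LHS integral
  have hIα : IntegrableOn
      (fun s : Fin m → ℝ => ∏ j, Real.exp (-(κ/2 * a j) * (s j) ^ (2*H)))
      (Set.pi Set.univ fun _ : Fin m => Ioo (0:ℝ) T) :=
    integrableOn_box_prodExp (fun j => κ/2 * a j) hbnn (2*H) T
  have hupper : (∫ s in incRegion m T,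
      ∏ j, Real.exp (-(κ/2 * a j) * (s j) ^ (2*H))) ≤ ∏ j, F j := by
    rw [hFdef, ← integral_box T (fun j x => Real.exp (-(κ/2 * a j) * x ^ (2*H)))]
    refine setIntegral_mono_set hIα ?_
      (HasSubset.Subset.eventuallyLE (incRegion_subset_box m T))
    filter_upwards with s
    exact Finset.prod_nonneg fun j _ => (Real.exp_pos _).le
  have hLnn : 0 ≤ ∫ s in incRegion m T,
      ∏ j, Real.exp (-(κ/2 * a j) * (s j) ^ (2*H)) :=
    setIntegral_nonneg (measurableSet_incRegion m T)
      (fun s _ => Finset.prod_nonneg fun j _ => (Real.exp_pos _).le)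
  -- lower bound for the RHS integral
  have hIβ : IntegrableOn
      (fun s : Fin m → ℝ => ∏ j, Real.exp (-(κ/2 * a j) * (s j) ^ (2*H/p)))
      (incRegion m T) :=
    (integrableOn_box_prodExp (fun j => κ/2 * a j) hbnn (2*H/p) T).mono_set
      (incRegion_subset_box m T)
  have hlower : (∏ j, G j) ≤ ∫ s in incRegion m T,
      ∏ j, Real.exp (-(κ/2 * a j) * (s j) ^ (2*H/p)) := by
    rw [hGdef, ← integral_box (T/m) (fun j x => Real.exp (-(κ/2 * a j) * x ^ (2*H/p)))]
    refine setIntegral_mono_set hIβ ?_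
      (HasSubset.Subset.eventuallyLE (box_subset_incRegion hm0 T))
    filter_upwards with s
    exact Finset.prod_nonneg fun j _ => (Real.exp_pos _).le
  -- combine
  calc (∫ s in incRegion m T,
        ∏ j, Real.exp (-(κ/2 * a j) * (s j) ^ (2*H))) ^ p
      ≤ (∏ j, F j) ^ p := Real.rpow_le_rpow hLnn hupper hp0.le
    _ = ∏ j, (F j) ^ p := (Real.finset_prod_rpow _ _ (fun j _ => hFnn j) p).symm
    _ ≤ ∏ j, (C * G j) :=
        Finset.prod_le_prod (fun j _ => Real.rpow_nonneg (hFnn j) p)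
          (fun j _ => hCall (a j) (ha j))
    _ = C ^ m * ∏ j, G j := by
        rw [Finset.prod_mul_distrib, Finset.prod_const, Finset.card_univ, Fintype.card_fin]
    _ ≤ C ^ m * ∫ s in incRegion m T,
          ∏ j, Real.exp (-(κ/2 * a j) * (s j) ^ (2*H/p)) :=
        mul_le_mul_of_nonneg_left hlower (pow_nonneg hC.le m)

end
end

section
/- Let T>0, H∈(0,1), p≥1 and m∈ℕ, m≥1. Then there exists a constant C>0, depending only on T, m, H and p, such that for every real a≥0: (∫₀^T e^{−a v^{2H}} dv)^p ≤ C·∫₀^{T/m} e^{−a v^{2H/p}} dv. -/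
/-!
Both integrals are comparable to the length of the interval cut off at the natural scale:
`∫₀^S exp (-a v ^ q) dv ≍ min S (a ^ (-1 / q))`, from above by the Gamma integral over `(0, ∞)`,
from below because the integrand is at least `exp (-1)` on `[0, a ^ (-1 / q)]`.
Since `a ^ (-1 / (2H/p)) = (a ^ (-1 / (2H))) ^ p`, the `p`-th power of the scale on the left is the
scale on the right, and the two truncated minima differ by a factor depending on `T` and `m` only.
-/

open MeasureTheory Real Set

noncomputable section

section ExpNegMulRpow

variable {a q S : ℝ}

lemma intervalIntegral_exp_neg_mul_rpow_le_length (ha : 0 ≤ a) (hS : 0 ≤ S) :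
    ∫ v in (0 : ℝ)..S, exp (-a * v ^ q) ≤ S := by
  have hbound : ∀ v ∈ uIoc (0 : ℝ) S, ‖exp (-a * v ^ q)‖ ≤ 1 := by
    intro v hv
    rw [uIoc_of_le hS] at hv
    rw [norm_of_nonneg (exp_nonneg _), exp_le_one_iff, neg_mul, neg_nonpos]
    exact mul_nonneg ha (rpow_nonneg hv.1.le q)
  calc ∫ v in (0 : ℝ)..S, exp (-a * v ^ q)
      ≤ ‖∫ v in (0 : ℝ)..S, exp (-a * v ^ q)‖ := le_norm_self _
    _ ≤ 1 * |S - 0| := intervalIntegral.norm_integral_le_of_norm_le_const hbound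
    _ = S := by rw [one_mul, sub_zero, abs_of_nonneg hS]

lemma intervalIntegral_exp_neg_mul_rpow_le_Gamma (ha : 0 < a) (hq : 0 < q) (hS : 0 ≤ S) :
    ∫ v in (0 : ℝ)..S, exp (-a * v ^ q) ≤ a ^ (-1 / q) * Gamma (1 / q + 1) := by
  have hint : IntegrableOn (fun v : ℝ ↦ exp (-a * v ^ q)) (Ioi 0) := by
    simpa using integrableOn_rpow_mul_exp_neg_mul_rpow neg_one_lt_zero hq ha
  rw [intervalIntegral.integral_of_le hS, ← integral_exp_neg_mul_rpow hq ha]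
  exact setIntegral_mono_set hint (.of_forall fun _ ↦ exp_nonneg _)
    Ioc_subset_Ioi_self.eventuallyLE

/-- For `a > 0` the scale is `b = a ^ (-1 / q)`; for `a = 0` any `b ≥ S` works. -/
lemma exists_intervalIntegral_exp_neg_mul_rpow_le_min (ha : 0 ≤ a) (hq : 0 < q) (hS : 0 < S) :
    ∃ b > 0, a * b ^ q ≤ 1 ∧
      ∫ v in (0 : ℝ)..S, exp (-a * v ^ q) ≤ max 1 (Gamma (1 / q + 1)) * min S b := by
  have hK : 1 ≤ max 1 (Gamma (1 / q + 1)) := le_max_left _ _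
  have hlength := intervalIntegral_exp_neg_mul_rpow_le_length (q := q) ha hS.le
  rcases ha.eq_or_lt with rfl | ha
  · refine ⟨S, hS, by simp, ?_⟩
    rw [min_self]
    exact hlength.trans (le_mul_of_one_le_left hS.le hK)
  · refine ⟨a ^ (-1 / q), rpow_pos_of_pos ha _, ?_, ?_⟩
    · rw [← rpow_mul ha.le, div_mul_cancel₀ _ hq.ne', rpow_neg_one, mul_inv_cancel₀ ha.ne']
    · rw [mul_min_of_nonneg _ _ (zero_le_one.trans hK)]
      refine le_min (hlength.trans (le_mul_of_one_le_left hS.le hK)) ?_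
      rw [mul_comm]
      exact (intervalIntegral_exp_neg_mul_rpow_le_Gamma ha hq hS.le).trans
        (mul_le_mul_of_nonneg_left (le_max_right _ _) (rpow_nonneg ha.le _))

lemma exp_neg_one_mul_min_le_intervalIntegral_exp_neg_mul_rpow {c : ℝ} (ha : 0 ≤ a)
    (hq : 0 ≤ q) (hS : 0 ≤ S) (hc : 0 ≤ c) (hac : a * c ^ q ≤ 1) :
    exp (-1) * min S c ≤ ∫ v in (0 : ℝ)..S, exp (-a * v ^ q) := by
  have hr : 0 ≤ min S c := le_min hS hc
  have hcont : Continuous fun v : ℝ ↦ exp (-a * v ^ q) := by fun_prop (disch := exact hq)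
  calc exp (-1) * min S c = ∫ _ in (0 : ℝ)..min S c, exp (-1) := by simp [mul_comm]
    _ ≤ ∫ v in (0 : ℝ)..min S c, exp (-a * v ^ q) := by
      refine intervalIntegral.integral_mono_on hr intervalIntegrable_const
        (hcont.intervalIntegrable _ _) fun v hv ↦ ?_
      rw [exp_le_exp, neg_mul, neg_le_neg_iff]
      calc a * v ^ q ≤ a * c ^ q := by
            gcongr
            exacts [hv.1, hv.2.trans (min_le_right _ _)]
        _ ≤ 1 := hac
    _ ≤ ∫ v in (0 : ℝ)..S, exp (-a * v ^ q) :=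
      intervalIntegral.integral_mono_interval le_rfl hr (min_le_left _ _)
        (.of_forall fun _ ↦ exp_nonneg _) (hcont.intervalIntegrable _ _)

end ExpNegMulRpow

lemma le_max_one_div_mul_min {x u w S : ℝ} (hS : 0 < S) (hw : 0 ≤ w) (hxu : x ≤ u)
    (hxw : x ≤ w) : x ≤ max 1 (u / S) * min S w := by
  rcases le_total S w with h | h
  · rw [min_eq_left h]
    calc x ≤ u / S * S := by rwa [div_mul_cancel₀ _ hS.ne']
      _ ≤ max 1 (u / S) * S := by gcongr; exact le_max_right _ _
  · rw [min_eq_right h]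
    calc x ≤ 1 * w := by rwa [one_mul]
      _ ≤ max 1 (u / S) * w := by gcongr; exact le_max_left _ _

theorem stmt9
    (T : ℝ) (hT : 0 < T) (H : ℝ) (hH : H ∈ Set.Ioo (0 : ℝ) 1)
    (p : ℝ) (hp : 1 ≤ p) (m : ℕ) (hm : 1 ≤ m) :
    ∃ C : ℝ, 0 < C ∧
      ∀ a : ℝ, 0 ≤ a →
        (∫ v in (0 : ℝ)..T, Real.exp (-a * v ^ (2 * H))) ^ p
          ≤ C * ∫ v in (0 : ℝ)..(T / m), Real.exp (-a * v ^ (2 * H / p)) := by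
  have hp0 : 0 < p := zero_lt_one.trans_le hp
  have hS : 0 < T / m := div_pos hT (by exact_mod_cast hm)
  set K := max 1 (Gamma (1 / (2 * H) + 1))
  have hK : 0 < K := zero_lt_one.trans_le (le_max_left _ _)
  refine ⟨K ^ p * max 1 (T ^ p / (T / m)) * exp 1, by positivity, fun a ha ↦ ?_⟩
  obtain ⟨b, hb, hab, hupper⟩ :=
    exists_intervalIntegral_exp_neg_mul_rpow_le_min ha (by linarith [hH.1] : (0 : ℝ) < 2 * H) hT
  have hbp : a * (b ^ p) ^ (2 * H / p) ≤ 1 := by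
    rwa [← rpow_mul hb.le, mul_div_cancel₀ _ hp0.ne']
  have hlower := exp_neg_one_mul_min_le_intervalIntegral_exp_neg_mul_rpow ha
    (by have := hH.1; positivity) hS.le (rpow_nonneg hb.le p) hbp
  have hJ : 0 ≤ ∫ v in (0 : ℝ)..T, exp (-a * v ^ (2 * H)) :=
    intervalIntegral.integral_nonneg hT.le fun _ _ ↦ exp_nonneg _
  have hmin : min T b ^ p ≤ max 1 (T ^ p / (T / m)) * min (T / m) (b ^ p) :=
    le_max_one_div_mul_min hS (rpow_nonneg hb.le p)
      (rpow_le_rpow (le_min hT.le hb.le) (min_le_left _ _) hp0.le)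
      (rpow_le_rpow (le_min hT.le hb.le) (min_le_right _ _) hp0.le)
  calc (∫ v in (0 : ℝ)..T, exp (-a * v ^ (2 * H))) ^ p
      ≤ (K * min T b) ^ p := rpow_le_rpow hJ hupper hp0.le
    _ = K ^ p * min T b ^ p := mul_rpow hK.le (le_min hT.le hb.le)
    _ ≤ K ^ p * (max 1 (T ^ p / (T / m)) * min (T / m) (b ^ p)) := by gcongr
    _ ≤ K ^ p * (max 1 (T ^ p / (T / m)) *
          (exp 1 * ∫ v in (0 : ℝ)..(T / m), exp (-a * v ^ (2 * H / p)))) := by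
      gcongr
      rwa [exp_neg, inv_mul_le_iff₀ (exp_pos 1)] at hlower
    _ = _ := by ring

end
end

section
/- Let T>0, H∈(0,1), p≥1 and m∈ℕ, m≥1, and define f_T(a) = (∫₀^T e^{−a v^{2H}} dv)^p / (∫₀^{T/m} e^{−a v^{2H/p}} dv) for a≥0. Then f_T is continuous on [0,∞), f_T(0) = m·T^{p−1}, and lim_{a→∞} f_T(a) = Γ(1/(2H))^p / (p·(2H)^{p−1}·Γ(p/(2H))), where Γ denotes the Gamma function. -/
open MeasureTheory Filter Topology

noncomputable section

/-!
The substitution `u = a ^ (1 / c) v` turns `∫₀ᵇ exp (-a v ^ c) dv` into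
`a ^ (-1 / c) ∫₀^{b a ^ (1 / c)} exp (-u ^ c) du`, and the last integral tends to
`∫₀^∞ exp (-u ^ c) du = Γ (1 / c + 1)`. With `c = 2H` in the numerator and `c = 2H / p` in the
denominator, the powers `a ^ (p / (2H))` cancel in the quotient, which therefore tends to
`Γ (1 / (2H) + 1) ^ p / Γ (p / (2H) + 1)`.
-/

lemma integrableOn_Ioi_exp_neg_rpow {c : ℝ} (hc : 0 < c) :
    IntegrableOn (fun x : ℝ => Real.exp (-x ^ c)) (Set.Ioi 0) := by
  simpa using integrableOn_rpow_mul_exp_neg_rpow neg_one_lt_zero hc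

lemma continuous_exp_neg_mul_rpow {c : ℝ} (hc : 0 ≤ c) :
    Continuous fun q : ℝ × ℝ => Real.exp (-q.1 * q.2 ^ c) :=
  (continuous_fst.neg.mul (continuous_snd.rpow_const fun _ => Or.inr hc)).rexp

lemma continuous_intervalIntegral_exp_neg_mul_rpow {c : ℝ} (hc : 0 ≤ c) (b : ℝ) :
    Continuous fun a : ℝ => ∫ v in (0 : ℝ)..b, Real.exp (-a * v ^ c) :=
  intervalIntegral.continuous_parametric_intervalIntegral_of_continuous'
    (continuous_exp_neg_mul_rpow hc) 0 b

lemma intervalIntegral_exp_neg_mul_rpow_pos {c b : ℝ} (hc : 0 ≤ c) (hb : 0 < b) (a : ℝ) :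
    0 < ∫ v in (0 : ℝ)..b, Real.exp (-a * v ^ c) :=
  intervalIntegral.intervalIntegral_pos_of_pos
    (((continuous_exp_neg_mul_rpow hc).comp (Continuous.prodMk_right a)).intervalIntegrable _ _)
    (fun _ => Real.exp_pos _) hb

lemma rpow_mul_intervalIntegral_exp_neg_mul_rpow {c a b : ℝ} (hc : 0 < c) (ha : 0 < a)
    (hb : 0 ≤ b) :
    a ^ (1 / c) * ∫ v in (0 : ℝ)..b, Real.exp (-a * v ^ c) =
      ∫ u in (0 : ℝ)..b * a ^ (1 / c), Real.exp (-u ^ c) := by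
  have hsubst := intervalIntegral.smul_integral_comp_mul_right (a := 0) (b := b)
    (fun u => Real.exp (-u ^ c)) (a ^ (1 / c))
  rw [zero_mul, smul_eq_mul] at hsubst
  rw [← hsubst]
  congr 1
  refine intervalIntegral.integral_congr fun v hv => ?_
  rw [Set.uIcc_of_le hb] at hv
  simp only [Real.mul_rpow hv.1 (Real.rpow_nonneg ha.le _), ← Real.rpow_mul ha.le,
    one_div_mul_cancel hc.ne', Real.rpow_one, neg_mul, mul_comm a]

lemma tendsto_rpow_mul_intervalIntegral_exp_neg_mul_rpow {c b : ℝ} (hc : 0 < c) (hb : 0 < b) :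
    Tendsto (fun a : ℝ => a ^ (1 / c) * ∫ v in (0 : ℝ)..b, Real.exp (-a * v ^ c)) atTop
      (𝓝 (Real.Gamma (1 / c + 1))) := by
  have hupper : Tendsto (fun a : ℝ => b * a ^ (1 / c)) atTop atTop :=
    (tendsto_rpow_atTop (by positivity)).const_mul_atTop hb
  have h := intervalIntegral_tendsto_integral_Ioi 0 (integrableOn_Ioi_exp_neg_rpow hc) hupper
  rw [integral_exp_neg_rpow hc] at h
  refine h.congr' ?_
  filter_upwards [eventually_gt_atTop 0] with a ha
  exact (rpow_mul_intervalIntegral_exp_neg_mul_rpow hc ha hb.le).symm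

lemma Real.Gamma_one_div_add_one_rpow_div {c p : ℝ} (hc : 0 < c) (hp : 0 < p) :
    Real.Gamma (1 / c + 1) ^ p / Real.Gamma (p / c + 1) =
      Real.Gamma (1 / c) ^ p / (p * c ^ (p - 1) * Real.Gamma (p / c)) := by
  have hΓ₁ := Real.Gamma_pos_of_pos (by positivity : 0 < 1 / c)
  have hΓp := Real.Gamma_pos_of_pos (by positivity : 0 < p / c)
  rw [Real.Gamma_add_one (by positivity), Real.Gamma_add_one (by positivity),
    Real.mul_rpow (by positivity) hΓ₁.le, Real.rpow_sub hc, Real.rpow_one, one_div,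
    Real.inv_rpow hc.le]
  have : c ^ p ≠ 0 := by positivity
  field_simp

lemma tendsto_intervalIntegral_exp_neg_mul_rpow_rpow_div {c p b b' : ℝ} (hc : 0 < c)
    (hp : 0 < p) (hb : 0 < b) (hb' : 0 < b') :
    Tendsto (fun a : ℝ => (∫ v in (0 : ℝ)..b, Real.exp (-a * v ^ c)) ^ p /
        ∫ v in (0 : ℝ)..b', Real.exp (-a * v ^ (c / p))) atTop
      (𝓝 (Real.Gamma (1 / c) ^ p / (p * c ^ (p - 1) * Real.Gamma (p / c)))) := by
  have hnum := (tendsto_rpow_mul_intervalIntegral_exp_neg_mul_rpow hc hb).rpow_const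
    (Or.inr hp.le)
  have hden := tendsto_rpow_mul_intervalIntegral_exp_neg_mul_rpow (by positivity : 0 < c / p) hb'
  rw [one_div_div] at hden
  rw [← Real.Gamma_one_div_add_one_rpow_div hc hp]
  refine (hnum.div hden (Real.Gamma_pos_of_pos (by positivity)).ne').congr' ?_
  filter_upwards [eventually_gt_atTop 0] with a ha
  have hI : 0 ≤ ∫ v in (0 : ℝ)..b, Real.exp (-a * v ^ c) :=
    intervalIntegral.integral_nonneg hb.le fun _ _ => (Real.exp_pos _).le
  rw [Pi.div_apply, Real.mul_rpow (Real.rpow_nonneg ha.le _) hI, ← Real.rpow_mul ha.le, one_div_mul_eq_div,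
    mul_div_mul_left _ _ (Real.rpow_pos_of_pos ha _).ne']

theorem stmt10
    (T : ℝ) (hT : 0 < T) (H : ℝ) (hH : H ∈ Set.Ioo (0 : ℝ) 1)
    (p : ℝ) (hp : 1 ≤ p) (m : ℕ) (hm : 1 ≤ m)
    (f : ℝ → ℝ)
    (hf : ∀ a : ℝ, f a =
      (∫ v in (0 : ℝ)..T, Real.exp (-a * v ^ (2 * H))) ^ p /
        ∫ v in (0 : ℝ)..(T / m), Real.exp (-a * v ^ (2 * H / p))) :
    ContinuousOn f (Set.Ici (0 : ℝ)) ∧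
    f 0 = m * T ^ (p - 1) ∧
    Tendsto f atTop
      (𝓝 (Real.Gamma (1 / (2 * H)) ^ p /
        (p * (2 * H) ^ (p - 1) * Real.Gamma (p / (2 * H))))) := by
  have hp0 : 0 < p := zero_lt_one.trans_le hp
  have hc : 0 < 2 * H := by linarith [hH.1]
  have hm0 : (0 : ℝ) < m := by exact_mod_cast hm
  have hTm : 0 < T / m := by positivity
  obtain rfl := funext hf
  refine ⟨Continuous.continuousOn ?_, ?_,
    tendsto_intervalIntegral_exp_neg_mul_rpow_rpow_div hc hp0 hT hTm⟩
  · exact ((continuous_intervalIntegral_exp_neg_mul_rpow hc.le T).rpow_const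
      fun _ => Or.inr hp0.le).div (continuous_intervalIntegral_exp_neg_mul_rpow (by positivity) _)
      fun a => (intervalIntegral_exp_neg_mul_rpow_pos (by positivity) hTm a).ne'
  · simp only [neg_zero, zero_mul, Real.exp_zero, intervalIntegral.integral_const, sub_zero,
      smul_eq_mul, mul_one]
    rw [Real.rpow_sub_one hT.ne']
    field_simp
end
end

section
/- Let T>0, h>0, m∈ℕ with m≥1, and a₁,…,a_m ∈ (0,1). Then ∫_{D^m_{T,h}} Π_{j=1}^m u_j^{−a_j} du ≤ (Π_{j=1}^m Γ(1−a_j) / Γ(m+1−Σ_{i=1}^m a_i)) · h^{Σ_{i=1}^m (1−a_i)}, where D^m_{T,h} = {u ∈ ℝ^m : u₁ > T, u_i ≥ 0 for i=2,…,m, and u₁+u₂+⋯+u_m < T+h} and Γ denotes the Gamma function. -/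
/-!
Translating by `T` in the distinguished coordinate maps `D^m_{T,h}` into the closed simplex
`{w ≥ 0, ∑ w ≤ h}`, and since all exponents `-a_j` are negative the integrand can only grow
under this translation. On the simplex the integral is Dirichlet's: slicing off the first
coordinate `t` and using the formula in one dimension less for the slice `∑ w ≤ c - t` leaves a
Beta integral in `t`, so by induction on the dimension
`∫_{w ≥ 0, ∑ w ≤ c} ∏ w_j ^ (p_j - 1) = ∏ Γ(p_j) / Γ(∑ p_j + 1) * c ^ ∑ p_j`;
take `p_j = 1 - a_j`.
-/

open MeasureTheory Set

def solidSimplex (ι : Type*) [Fintype ι] (c : ℝ) : Set (ι → ℝ) :=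
  {w | (∀ i, 0 ≤ w i) ∧ ∑ i, w i ≤ c}

theorem measurableSet_solidSimplex (ι : Type*) [Fintype ι] (c : ℝ) :
    MeasurableSet (solidSimplex ι c) := by
  simp only [solidSimplex, ofPred_and, ofPred_forall]
  exact (MeasurableSet.iInter fun i =>
    measurableSet_le measurable_const (measurable_pi_apply i)).inter
      (measurableSet_le (Finset.measurable_sum _ fun i _ => measurable_pi_apply i) measurable_const)

theorem Fin.cons_mem_solidSimplex_iff {m : ℕ} {c t : ℝ} {w : Fin m → ℝ} :
    (Fin.cons t w : Fin (m + 1) → ℝ) ∈ solidSimplex (Fin (m + 1)) c ↔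
      t ∈ Icc 0 c ∧ w ∈ solidSimplex (Fin m) (c - t) := by
  simp only [solidSimplex, mem_ofPred_eq, Fin.forall_fin_succ, Fin.sum_univ_succ, Fin.cons_zero,
    Fin.cons_succ, mem_Icc]
  constructor
  · rintro ⟨⟨ht, hw⟩, hsum⟩
    have : 0 ≤ ∑ i, w i := Finset.sum_nonneg fun i _ => hw i
    exact ⟨⟨ht, by linarith⟩, hw, by linarith⟩
  · rintro ⟨⟨ht, -⟩, hw, hsum⟩
    exact ⟨⟨ht, hw⟩, by linarith⟩

theorem lintegral_fin_succ_eq_lintegral_lintegral_cons {α : Type*} [MeasureSpace α]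
    [SigmaFinite (volume : Measure α)] {m : ℕ} {f : (Fin (m + 1) → α) → ENNReal}
    (hf : Measurable f) :
    ∫⁻ v, f v = ∫⁻ t, ∫⁻ w, f (Fin.cons t w) := by
  have hmp := (volume_preserving_piFinSuccAbove (fun _ : Fin (m + 1) => α) 0).symm
  rw [← hmp.lintegral_comp hf, Measure.volume_eq_prod,
    lintegral_prod (fun z => f (MeasurableEquiv.piFinSuccAbove (fun _ => α) 0 |>.symm z))
      (hf.comp (MeasurableEquiv.measurable _)).aemeasurable]
  simp only [MeasurableEquiv.piFinSuccAbove_symm_apply, Fin.insertNthEquiv,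
    Equiv.coe_fn_mk, Fin.insertNth_zero']

theorem setLIntegral_solidSimplex_succ {m : ℕ} {c : ℝ} {f : (Fin (m + 1) → ℝ) → ENNReal}
    (hf : Measurable f) :
    ∫⁻ v in solidSimplex (Fin (m + 1)) c, f v =
      ∫⁻ t in Icc 0 c, ∫⁻ w in solidSimplex (Fin m) (c - t), f (Fin.cons t w) := by
  have hslice : ∀ t w, (solidSimplex (Fin (m + 1)) c).indicator f (Fin.cons t w) =
      (Icc 0 c).indicator (fun t => (solidSimplex (Fin m) (c - t)).indicator
        (fun w => f (Fin.cons t w)) w) t := by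
    intro t w
    by_cases ht : t ∈ Icc 0 c <;> by_cases hw : w ∈ solidSimplex (Fin m) (c - t) <;>
      simp [indicator, Fin.cons_mem_solidSimplex_iff, ht, hw]
  rw [← lintegral_indicator (measurableSet_solidSimplex _ c),
    lintegral_fin_succ_eq_lintegral_lintegral_cons (hf.indicator (measurableSet_solidSimplex _ c)),
    ← lintegral_indicator measurableSet_Icc]
  refine lintegral_congr fun t => ?_
  simp only [hslice]
  by_cases ht : t ∈ Icc 0 c
  · simp only [indicator_of_mem ht]
    exact lintegral_indicator (measurableSet_solidSimplex _ _) _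
  · simp [indicator_of_notMem ht]

theorem integral_rpow_mul_rpow_sub {p q c : ℝ} (hp : 0 < p) (hq : 0 < q) (hc : 0 < c) :
    ∫ t in 0..c, t ^ (p - 1) * (c - t) ^ (q - 1) =
      c ^ (p + q - 1) * (Real.Gamma p * Real.Gamma q / Real.Gamma (p + q)) := by
  have hcomplex := Complex.betaIntegral_scaled p q hc
  rw [Complex.betaIntegral_eq_Gamma_mul_div _ _ (by simpa using hp) (by simpa using hq)] at hcomplex
  have hcast : ∫ t in 0..c, (t : ℂ) ^ ((p : ℂ) - 1) * ((c : ℂ) - t) ^ ((q : ℂ) - 1) =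
      ((∫ t in 0..c, t ^ (p - 1) * (c - t) ^ (q - 1) : ℝ) : ℂ) := by
    rw [← intervalIntegral.integral_ofReal]
    refine intervalIntegral.integral_congr fun t ht => ?_
    rw [uIcc_of_le hc.le] at ht
    rw [Complex.ofReal_mul, Complex.ofReal_cpow ht.1,
      Complex.ofReal_cpow (sub_nonneg.2 ht.2)]
    push_cast
    ring_nf
  have hrhs : (c : ℂ) ^ ((p : ℂ) + q - 1) *
      (Complex.Gamma p * Complex.Gamma q / Complex.Gamma (p + q)) =
      ((c ^ (p + q - 1) * (Real.Gamma p * Real.Gamma q / Real.Gamma (p + q)) : ℝ) : ℂ) := by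
    rw [Complex.ofReal_mul, Complex.ofReal_cpow hc.le, Complex.ofReal_div, Complex.ofReal_mul,
      ← Complex.Gamma_ofReal, ← Complex.Gamma_ofReal, ← Complex.Gamma_ofReal]
    push_cast
    rfl
  rw [hcast, hrhs] at hcomplex
  exact_mod_cast hcomplex

theorem lintegral_Ioo_rpow_mul_rpow_sub {p q c : ℝ} (hp : 0 < p) (hq : 0 < q) (hc : 0 < c) :
    ∫⁻ t in Ioo 0 c, ENNReal.ofReal (t ^ (p - 1) * (c - t) ^ (q - 1)) =
      ENNReal.ofReal (c ^ (p + q - 1) * (Real.Gamma p * Real.Gamma q / Real.Gamma (p + q))) := by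
  have hval := integral_rpow_mul_rpow_sub hp hq hc
  have hpos : 0 < c ^ (p + q - 1) * (Real.Gamma p * Real.Gamma q / Real.Gamma (p + q)) := by
    have := Real.Gamma_pos_of_pos hp
    have := Real.Gamma_pos_of_pos hq
    have := Real.Gamma_pos_of_pos (add_pos hp hq)
    positivity
  -- a nonzero interval integral forces integrability
  have hint := intervalIntegral.intervalIntegrable_of_integral_ne_zero (hval ▸ hpos.ne')
  rw [intervalIntegrable_iff_integrableOn_Ioc_of_le hc.le] at hint
  rw [intervalIntegral.integral_of_le hc.le, integral_Ioc_eq_integral_Ioo] at hval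
  rw [← hval, ofReal_integral_eq_lintegral_ofReal (hint.mono_set Ioo_subset_Ioc_self)]
  filter_upwards [ae_restrict_mem measurableSet_Ioo] with t ht
  exact mul_nonneg (Real.rpow_nonneg ht.1.le _) (Real.rpow_nonneg (sub_nonneg.2 ht.2.le) _)

theorem lintegral_solidSimplex_prod_rpow (m : ℕ) (p : Fin m → ℝ) (hp : ∀ j, 0 < p j) {c : ℝ}
    (hc : 0 < c) :
    ∫⁻ w in solidSimplex (Fin m) c, ∏ j, ENNReal.ofReal (w j ^ (p j - 1)) =
      ENNReal.ofReal ((∏ j, Real.Gamma (p j)) / Real.Gamma (∑ j, p j + 1) * c ^ ∑ j, p j) := by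
  induction m generalizing c with
  | zero => simp [solidSimplex, hc.le, Real.Gamma_one, volume_pi]
  | succ m ih =>
    set P := ∑ j : Fin m, p j.succ
    set C := (∏ j : Fin m, Real.Gamma (p j.succ)) / Real.Gamma (P + 1)
    have hP : 0 ≤ P := Finset.sum_nonneg fun j _ => (hp _).le
    have hC : 0 ≤ C := div_nonneg (Finset.prod_nonneg fun j _ => (Real.Gamma_pos_of_pos (hp _)).le)
      (Real.Gamma_pos_of_pos (by linarith)).le
    have hslice : ∀ t ∈ Ioo 0 c, ∫⁻ w in solidSimplex (Fin m) (c - t),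
        ∏ j, ENNReal.ofReal ((Fin.cons t w : Fin (m + 1) → ℝ) j ^ (p j - 1)) =
        ENNReal.ofReal C * ENNReal.ofReal (t ^ (p 0 - 1) * (c - t) ^ (P + 1 - 1)) := by
      intro t ht
      simp only [Fin.prod_univ_succ, Fin.cons_zero, Fin.cons_succ]
      rw [lintegral_const_mul' _ _ ENNReal.ofReal_ne_top,
        ih (fun j => p j.succ) (fun j => hp _) (sub_pos.2 ht.2),
        ← ENNReal.ofReal_mul (Real.rpow_nonneg ht.1.le _), ← ENNReal.ofReal_mul hC]
      congr 1
      simp only [C, P]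
      ring_nf
    rw [setLIntegral_solidSimplex_succ (by fun_prop), setLIntegral_congr Ioo_ae_eq_Icc.symm,
      setLIntegral_congr_fun measurableSet_Ioo hslice,
      lintegral_const_mul' _ _ ENNReal.ofReal_ne_top,
      lintegral_Ioo_rpow_mul_rpow_sub (hp 0) (by linarith) hc, ← ENNReal.ofReal_mul hC]
    congr 1
    have hΓ : Real.Gamma (P + 1) ≠ 0 := (Real.Gamma_pos_of_pos (by linarith)).ne'
    rw [Fin.prod_univ_succ, Fin.sum_univ_succ]
    simp only [C, P] at hΓ ⊢
    field_simp
    ring_nf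

section Translated

variable {ι : Type*} [Fintype ι]

/-- The region `D^m_{T,h}` of the paper, with `i₀` playing the role of the first coordinate. -/
def translatedSimplex (i₀ : ι) (T h : ℝ) : Set (ι → ℝ) :=
  {u | T < u i₀ ∧ (∀ i, i ≠ i₀ → 0 ≤ u i) ∧ ∑ i, u i < T + h}

theorem measurableSet_translatedSimplex (i₀ : ι) (T h : ℝ) :
    MeasurableSet (translatedSimplex i₀ T h) := by
  simp only [translatedSimplex, ofPred_and, ofPred_forall]
  refine (measurableSet_lt measurable_const (measurable_pi_apply i₀)).inter
    ((MeasurableSet.iInter fun i => MeasurableSet.iInter fun _ =>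
      measurableSet_le measurable_const (measurable_pi_apply i)).inter
    (measurableSet_lt (Finset.measurable_sum _ fun i _ => measurable_pi_apply i) measurable_const))

variable {i₀ : ι} {T h : ℝ} {u : ι → ℝ}

theorem nonneg_of_mem_translatedSimplex (hT : 0 ≤ T) (hu : u ∈ translatedSimplex i₀ T h)
    (j : ι) : 0 ≤ u j := by
  rcases eq_or_ne j i₀ with rfl | hj
  · exact hT.trans hu.1.le
  · exact hu.2.1 j hj

variable [DecidableEq ι]

theorem sub_single_mem_solidSimplex (hu : u ∈ translatedSimplex i₀ T h) :
    u - Pi.single i₀ T ∈ solidSimplex ι h := by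
  refine ⟨fun j => ?_, ?_⟩
  · rcases eq_or_ne j i₀ with rfl | hj
    · simpa using hu.1.le
    · simpa [hj] using hu.2.1 j hj
  · simp only [Pi.sub_apply, Finset.sum_sub_distrib, Finset.sum_pi_single', Finset.mem_univ,
      if_true]
    linarith [hu.2.2]

theorem ofReal_prod_rpow_neg_le_sub_single {a : ι → ℝ} (hT : 0 ≤ T) (ha : ∀ j, 0 ≤ a j)
    (hu : u ∈ translatedSimplex i₀ T h) :
    ENNReal.ofReal (∏ j, u j ^ (-a j)) ≤
      ∏ j, ENNReal.ofReal ((u - Pi.single i₀ T : ι → ℝ) j ^ (-a j)) := by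
  rw [ENNReal.ofReal_prod_of_nonneg fun j _ =>
    Real.rpow_nonneg (nonneg_of_mem_translatedSimplex hT hu j) _]
  refine Finset.prod_le_prod' fun j _ => ENNReal.ofReal_le_ofReal ?_
  rcases eq_or_ne j i₀ with rfl | hj
  · simpa using Real.rpow_le_rpow_of_nonpos (sub_pos.2 hu.1) (sub_le_self _ hT)
      (neg_nonpos.2 (ha j))
  · simp [hj]

theorem setLIntegral_translatedSimplex_le {a : ι → ℝ} (hT : 0 ≤ T) (ha : ∀ j, 0 ≤ a j) :
    ∫⁻ u in translatedSimplex i₀ T h, ENNReal.ofReal (∏ j, u j ^ (-a j)) ≤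
      ∫⁻ v in solidSimplex ι h, ∏ j, ENNReal.ofReal (v j ^ (-a j)) := by
  have hF : Measurable fun v : ι → ℝ => ∏ j, ENNReal.ofReal (v j ^ (-a j)) := by fun_prop
  calc ∫⁻ u in translatedSimplex i₀ T h, ENNReal.ofReal (∏ j, u j ^ (-a j))
      ≤ ∫⁻ u in translatedSimplex i₀ T h,
          ∏ j, ENNReal.ofReal ((u - Pi.single i₀ T : ι → ℝ) j ^ (-a j)) := by
        refine setLIntegral_mono (hF.comp (measurable_sub_const _)) fun u hu => ?_
        exact ofReal_prod_rpow_neg_le_sub_single hT ha hu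
    _ ≤ ∫⁻ u in (fun u : ι → ℝ => u - Pi.single i₀ T) ⁻¹' solidSimplex ι h,
          ∏ j, ENNReal.ofReal ((u - Pi.single i₀ T : ι → ℝ) j ^ (-a j)) := by
        refine lintegral_mono_set fun u hu => ?_
        exact sub_single_mem_solidSimplex hu
    _ = ∫⁻ v in solidSimplex ι h, ∏ j, ENNReal.ofReal (v j ^ (-a j)) :=
        (measurePreserving_sub_right volume (Pi.single i₀ T : ι → ℝ)).setLIntegral_comp_preimage
          (measurableSet_solidSimplex ι h) hF

end Translated

theorem stmt12
    (T h : ℝ) (hT : 0 < T) (hh : 0 < h) (m : ℕ) (hm : 1 ≤ m)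
    (a : Fin m → ℝ) (ha : ∀ j, a j ∈ Set.Ioo (0 : ℝ) 1) :
    ∫ u in {u : Fin m → ℝ | T < u ⟨0, hm⟩ ∧
        (∀ i : Fin m, i ≠ ⟨0, hm⟩ → 0 ≤ u i) ∧ ∑ i, u i < T + h},
        ∏ j, (u j) ^ (-(a j))
      ≤ (∏ j, Real.Gamma (1 - a j)) / Real.Gamma ((m : ℝ) + 1 - ∑ i, a i)
          * h ^ (∑ i, (1 - a i)) := by
  change ∫ u in translatedSimplex ⟨0, hm⟩ T h, ∏ j, u j ^ (-a j) ≤ _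
  have hdirichlet := lintegral_solidSimplex_prod_rpow m (fun j => 1 - a j)
    (fun j => sub_pos.2 (ha j).2) hh
  have hexponent : ∑ j, (1 - a j) + 1 = (m : ℝ) + 1 - ∑ i, a i := by
    simp only [Finset.sum_sub_distrib, Finset.sum_const, Finset.card_univ, Fintype.card_fin,
      nsmul_eq_mul, mul_one]
    ring
  simp only [sub_sub_cancel_left, hexponent] at hdirichlet
  rw [integral_eq_lintegral_of_nonneg_ae _
    (Finset.measurable_prod _ fun j _ => by fun_prop).aestronglyMeasurable]
  · refine ENNReal.toReal_le_of_le_ofReal ?_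
      ((setLIntegral_translatedSimplex_le hT.le fun j => (ha j).1.le).trans hdirichlet.le)
    refine mul_nonneg (div_nonneg ?_ (Real.Gamma_nonneg_of_nonneg ?_)) (Real.rpow_nonneg hh.le _)
    · exact Finset.prod_nonneg fun j _ => (Real.Gamma_pos_of_pos (sub_pos.2 (ha j).2)).le
    · rw [← hexponent]
      exact add_nonneg (Finset.sum_nonneg fun j _ => (sub_pos.2 (ha j).2).le) zero_le_one
  · filter_upwards [ae_restrict_mem (measurableSet_translatedSimplex _ T h)] with u hu
    exact Finset.prod_nonneg fun j _ =>
      Real.rpow_nonneg (nonneg_of_mem_translatedSimplex hT.le hu j) _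
end

section
/- Let T>0, α≥0, H₁,H₂∈(0,1) and let d≥1 be an integer. Set J(ε) = ∫₀^T ∫₀^T (u^{2H₁} + v^{2H₂} + ε)^{−d/2−α} du dv. Then there exist constants 0 < c ≤ C (independent of ε) such that for all ε∈(0,T/2): (i) if (H₁+H₂)/(H₁H₂) < d+2α, then c·ε^{(H₁+H₂)/(2H₁H₂) − d/2 − α} ≤ J(ε) ≤ C·ε^{(H₁+H₂)/(2H₁H₂) − d/2 − α}; (ii) if (H₁+H₂)/(H₁H₂) = d+2α, then c·ln(1+ε^{−1/2}) ≤ J(ε) ≤ C·ln(1+ε^{−1/2}); (iii) if (H₁+H₂)/(H₁H₂) > d+2α, then c ≤ J(ε) ≤ C. -/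
/-!
With `p = 2H₁`, `q = 2H₂` and `β = d/2 + α`, the three cases compare `β` with `1/p + 1/q`.

For `A > 0`, splitting `∫₀ᵀ (v ^ s + A) ^ (-γ) dv` at `v = A ^ (1/s)`, where `v ^ s` overtakes `A`,
shows that it is of order `A ^ (1/s - γ)` if `sγ > 1`, of order `log (T / A ^ (1/s))` if `sγ = 1`,
and bounded if `sγ < 1`. With `s = q` and `A = u ^ p + ε` this turns the double integral, when
`β > 1/q`, into `∫₀ᵀ (u ^ p + ε) ^ (1/q - β) du` up to constants, and the same estimate with `s = p`
and `A = ε` gives the first two cases. In the third, write `β = θ/p + θ/q` with `θ < 1`: then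
`(u ^ p + v ^ q + ε) ^ (-β) ≤ (u ^ p + ε) ^ (-θ/p) (v ^ q + ε) ^ (-θ/q)`, and both factors are
integrable uniformly in `ε`.
-/

open MeasureTheory Real Set intervalIntegral

noncomputable section

def shiftedRpowIntegral (s γ T A : ℝ) : ℝ :=
  ∫ v in (0 : ℝ)..T, (v ^ s + A) ^ (-γ)

section OneVariable

variable {s γ T A : ℝ}

lemma intervalIntegrable_rpow_add (hs : 0 < s) (hA : 0 < A) {a b : ℝ} (ha : 0 ≤ a) (hb : 0 ≤ b)
    (r : ℝ) : IntervalIntegrable (fun v : ℝ => (v ^ s + A) ^ r) volume a b := by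
  refine ContinuousOn.intervalIntegrable fun v hv => ?_
  have hv : 0 ≤ v := (le_min ha hb).trans hv.1
  exact (((continuousAt_rpow_const v s (Or.inr hs.le)).add continuousAt_const).rpow_const
    (Or.inl (add_pos_of_nonneg_of_pos (rpow_nonneg hv s) hA).ne')).continuousWithinAt

lemma rpow_add_rpow_neg_le {v : ℝ} (hv : 0 < v) (hA : 0 ≤ A) (hγ : 0 ≤ γ) :
    (v ^ s + A) ^ (-γ) ≤ v ^ (-(s * γ)) := by
  calc (v ^ s + A) ^ (-γ) ≤ (v ^ s) ^ (-γ) :=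
        rpow_le_rpow_of_nonpos (by positivity) (le_add_of_nonneg_right hA) (neg_nonpos.2 hγ)
    _ = v ^ (-(s * γ)) := by rw [← rpow_mul hv.le, mul_neg]

lemma shiftedRpowIntegral_nonneg (hT : 0 ≤ T) (hA : 0 ≤ A) : 0 ≤ shiftedRpowIntegral s γ T A :=
  integral_nonneg hT fun v hv => by have := hv.1; positivity

lemma integral_le_shiftedRpowIntegral {a b : ℝ} (hs : 0 < s) (hA : 0 < A) (ha : 0 ≤ a)
    (hab : a ≤ b) (hbT : b ≤ T) :
    ∫ v in a..b, (v ^ s + A) ^ (-γ) ≤ shiftedRpowIntegral s γ T A :=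
  integral_mono_interval ha hab hbT
    ((ae_restrict_iff' measurableSet_Ioc).2 (ae_of_all _ fun v hv => by
      have := hv.1.le; positivity))
    (intervalIntegrable_rpow_add hs hA le_rfl ((ha.trans hab).trans hbT) _)

lemma antitoneOn_shiftedRpowIntegral (hs : 0 < s) (hT : 0 ≤ T) (hγ : 0 ≤ γ) :
    AntitoneOn (shiftedRpowIntegral s γ T) (Ioi 0) := fun _ hA _ hB hAB =>
  integral_mono_on hT (intervalIntegrable_rpow_add hs hB le_rfl hT _)
    (intervalIntegrable_rpow_add hs hA le_rfl hT _) fun _ hv =>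
      rpow_le_rpow_of_nonpos (add_pos_of_nonneg_of_pos (rpow_nonneg hv.1 s) hA)
        (add_le_add_right hAB _) (neg_nonpos.2 hγ)

lemma shiftedRpowIntegral_add_le {γ₁ γ₂ : ℝ} (hs : 0 < s) (hA : 0 < A) (hT : 0 ≤ T)
    (hγ₁ : 0 ≤ γ₁) :
    shiftedRpowIntegral s (γ₁ + γ₂) T A ≤ A ^ (-γ₁) * shiftedRpowIntegral s γ₂ T A := by
  rw [shiftedRpowIntegral, shiftedRpowIntegral, ← intervalIntegral.integral_const_mul]
  refine integral_mono_on hT (intervalIntegrable_rpow_add hs hA le_rfl hT _)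
    ((intervalIntegrable_rpow_add hs hA le_rfl hT _).const_mul _) fun v hv => ?_
  have hB : 0 < v ^ s + A := by have := hv.1; positivity
  rw [neg_add, rpow_add hB]
  exact mul_le_mul_of_nonneg_right
    (rpow_le_rpow_of_nonpos hA (le_add_of_nonneg_left (rpow_nonneg hv.1 s)) (neg_nonpos.2 hγ₁))
    (rpow_nonneg hB.le _)

lemma shiftedRpowIntegral_le_of_le_rpow (hs : 0 < s) (hA : 0 < A) (hγ : 0 ≤ γ) (hT : 0 ≤ T)
    (hTA : T ≤ A ^ s⁻¹) : shiftedRpowIntegral s γ T A ≤ A ^ (s⁻¹ - γ) :=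
  calc shiftedRpowIntegral s γ T A ≤ T * A ^ (-γ) := by
        simpa [shiftedRpowIntegral] using
          integral_mono_on hT (intervalIntegrable_rpow_add hs hA le_rfl hT _)
          intervalIntegrable_const fun v hv =>
            rpow_le_rpow_of_nonpos hA (le_add_of_nonneg_left (rpow_nonneg hv.1 s)) (neg_nonpos.2 hγ)
    _ ≤ A ^ s⁻¹ * A ^ (-γ) := by gcongr
    _ = A ^ (s⁻¹ - γ) := by rw [← rpow_add hA, sub_eq_add_neg]

lemma shiftedRpowIntegral_le_rpow_add_integral (hs : 0 < s) (hA : 0 < A) (hγ : 0 ≤ γ)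
    (hTA : A ^ s⁻¹ ≤ T) :
    shiftedRpowIntegral s γ T A ≤ A ^ (s⁻¹ - γ) + ∫ v in A ^ s⁻¹..T, v ^ (-(s * γ)) := by
  have hv₀ : 0 < A ^ s⁻¹ := rpow_pos_of_pos hA _
  rw [shiftedRpowIntegral, ← integral_add_adjacent_intervals
    (intervalIntegrable_rpow_add hs hA le_rfl hv₀.le _)
    (intervalIntegrable_rpow_add hs hA hv₀.le (hv₀.le.trans hTA) _)]
  refine add_le_add (shiftedRpowIntegral_le_of_le_rpow hs hA hγ hv₀.le le_rfl) ?_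
  refine integral_mono_on hTA (intervalIntegrable_rpow_add hs hA hv₀.le (hv₀.le.trans hTA) _)
    (intervalIntegrable_rpow (Or.inr fun h => ?_)) fun v hv =>
      rpow_add_rpow_neg_le (hv₀.trans_le hv.1) hA.le hγ
  rw [uIcc_of_le hTA] at h
  exact hv₀.not_ge h.1

lemma shiftedRpowIntegral_le_of_one_lt (hs : 0 < s) (hA : 0 < A) (hT : 0 ≤ T) (hsγ : 1 < s * γ) :
    shiftedRpowIntegral s γ T A ≤ (1 + (s * γ - 1)⁻¹) * A ^ (s⁻¹ - γ) := by
  have hγ : 0 ≤ γ := (pos_of_mul_pos_right (by linarith) hs.le).le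
  have hc : 0 < s * γ - 1 := by linarith
  rcases le_total T (A ^ s⁻¹) with hTA | hTA
  · refine (shiftedRpowIntegral_le_of_le_rpow hs hA hγ hT hTA).trans
      (le_mul_of_one_le_left (by positivity) ?_)
    linarith [inv_pos.2 hc]
  · refine (shiftedRpowIntegral_le_rpow_add_integral hs hA hγ hTA).trans ?_
    have hv₀ : (A ^ s⁻¹) ^ (-(s * γ) + 1) = A ^ (s⁻¹ - γ) := by
      rw [← rpow_mul hA.le]; congr 1; field_simp; ring
    rw [integral_rpow (Or.inr ⟨by linarith, fun h => ?_⟩), hv₀,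
      show -(s * γ) + 1 = -(s * γ - 1) by ring, div_neg, ← neg_div, neg_sub]
    · have : (1 + (s * γ - 1)⁻¹) * A ^ (s⁻¹ - γ) =
          A ^ (s⁻¹ - γ) + A ^ (s⁻¹ - γ) / (s * γ - 1) := by ring
      rw [this]
      gcongr
      exact sub_le_self _ (rpow_nonneg hT _)
    · rw [uIcc_of_le hTA] at h
      exact (rpow_pos_of_pos hA _).not_ge h.1

lemma shiftedRpowIntegral_inv_le (hs : 0 < s) (hA : 0 < A) (hT : 0 < T) :
    shiftedRpowIntegral s s⁻¹ T A ≤ 1 + max 0 (log T - s⁻¹ * log A) := by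
  rcases le_total T (A ^ s⁻¹) with hTA | hTA
  · calc shiftedRpowIntegral s s⁻¹ T A ≤ A ^ (s⁻¹ - s⁻¹) :=
          shiftedRpowIntegral_le_of_le_rpow hs hA (by positivity) hT.le hTA
      _ ≤ 1 + max 0 (log T - s⁻¹ * log A) := by
          rw [sub_self, rpow_zero]; linarith [le_max_left 0 (log T - s⁻¹ * log A)]
  · refine (shiftedRpowIntegral_le_rpow_add_integral hs hA (by positivity) hTA).trans ?_
    simp only [sub_self, rpow_zero, mul_inv_cancel₀ hs.ne', rpow_neg_one]
    rw [integral_inv_of_pos (rpow_pos_of_pos hA _) hT, log_div hT.ne' (rpow_pos_of_pos hA _).ne',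
      log_rpow hA]
    exact add_le_add_right (le_max_right _ _) 1

lemma shiftedRpowIntegral_le_of_lt_one (hs : 0 < s) (hA : 0 < A) (hT : 0 ≤ T) (hγ : 0 ≤ γ)
    (hsγ : s * γ < 1) : shiftedRpowIntegral s γ T A ≤ T ^ (1 - s * γ) / (1 - s * γ) := by
  calc shiftedRpowIntegral s γ T A ≤ ∫ v in (0 : ℝ)..T, v ^ (-(s * γ)) :=
        integral_mono_on_of_le_Ioo hT (intervalIntegrable_rpow_add hs hA le_rfl hT _)
          (intervalIntegrable_rpow' (by linarith)) fun v hv => rpow_add_rpow_neg_le hv.1 hA.le hγ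
    _ = T ^ (1 - s * γ) / (1 - s * γ) := by
        rw [integral_rpow (Or.inl (by linarith)), zero_rpow (by linarith), sub_zero,
          neg_add_eq_sub]

lemma min_one_mul_rpow_le_min {e M : ℝ} (hT : 0 ≤ T) (he : 0 ≤ e) (hA : 0 < A) (hAM : A ≤ M) :
    min 1 (T * M ^ (-e)) * A ^ e ≤ min T (A ^ e) := by
  have hM : 0 < M := hA.trans_le hAM
  refine le_min ?_ (mul_le_of_le_one_left (by positivity) (min_le_left _ _))
  calc min 1 (T * M ^ (-e)) * A ^ e ≤ T * M ^ (-e) * M ^ e := by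
        gcongr
        exact min_le_right _ _
    _ = T := by rw [mul_assoc, ← rpow_add hM, neg_add_cancel, rpow_zero, mul_one]

lemma mul_rpow_le_shiftedRpowIntegral {M : ℝ} (hs : 0 < s) (hA : 0 < A) (hT : 0 < T) (hγ : 0 ≤ γ)
    (hAM : A ≤ M) :
    min 1 (T * M ^ (-s⁻¹)) * 2 ^ (-γ) * A ^ (s⁻¹ - γ) ≤ shiftedRpowIntegral s γ T A := by
  set δ := min T (A ^ s⁻¹)
  have hδ : 0 < δ := lt_min hT (rpow_pos_of_pos hA _)
  have hδT : δ ≤ T := min_le_left _ _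
  have hpt : ∀ v ∈ Icc 0 δ, (2 * A) ^ (-γ) ≤ (v ^ s + A) ^ (-γ) := fun v hv => by
    have hvA : v ^ s ≤ A :=
      (le_rpow_inv_iff_of_pos hv.1 hA.le hs).1 (hv.2.trans (min_le_right _ _))
    exact rpow_le_rpow_of_nonpos (by have := hv.1; positivity) (by linarith) (neg_nonpos.2 hγ)
  calc min 1 (T * M ^ (-s⁻¹)) * 2 ^ (-γ) * A ^ (s⁻¹ - γ)
        = min 1 (T * M ^ (-s⁻¹)) * A ^ s⁻¹ * (2 * A) ^ (-γ) := by
          rw [mul_rpow zero_le_two hA.le, sub_eq_add_neg, rpow_add hA]; ring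
    _ ≤ δ * (2 * A) ^ (-γ) := by
        gcongr
        exact min_one_mul_rpow_le_min hT.le (by positivity) hA hAM
    _ ≤ ∫ v in (0 : ℝ)..δ, (v ^ s + A) ^ (-γ) := by
        simpa using integral_mono_on hδ.le intervalIntegrable_const
          (intervalIntegrable_rpow_add hs hA le_rfl hδ.le _) hpt
    _ ≤ shiftedRpowIntegral s γ T A := integral_le_shiftedRpowIntegral hs hA le_rfl hδ.le hδT

lemma shiftedRpowIntegral_pos (hs : 0 < s) (hA : 0 < A) (hT : 0 < T) (hγ : 0 ≤ γ) :
    0 < shiftedRpowIntegral s γ T A :=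
  lt_of_lt_of_le (by positivity) (mul_rpow_le_shiftedRpowIntegral hs hA hT hγ le_rfl)

lemma mul_log_le_shiftedRpowIntegral (hs : 0 < s) (hA : 0 < A) (hT : 0 < T) :
    2 ^ (-s⁻¹) * (log T - s⁻¹ * log A) ≤ shiftedRpowIntegral s s⁻¹ T A := by
  have hv₀ : 0 < A ^ s⁻¹ := rpow_pos_of_pos hA _
  have hlog : log (A ^ s⁻¹) = s⁻¹ * log A := log_rpow hA _
  rcases le_total T (A ^ s⁻¹) with hTA | hTA
  · refine le_trans ?_ (shiftedRpowIntegral_nonneg hT.le hA.le)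
    have : log T ≤ s⁻¹ * log A := hlog ▸ log_le_log hT hTA
    exact mul_nonpos_of_nonneg_of_nonpos (by positivity) (by linarith)
  have hpt : ∀ v ∈ Icc (A ^ s⁻¹) T, 2 ^ (-s⁻¹) * v⁻¹ ≤ (v ^ s + A) ^ (-s⁻¹) := fun v hv => by
    have hv0 : 0 < v := hv₀.trans_le hv.1
    have hAv : A ≤ v ^ s := (rpow_inv_le_iff_of_pos hA.le hv0.le hs).1 hv.1
    calc 2 ^ (-s⁻¹) * v⁻¹ = (2 * v ^ s) ^ (-s⁻¹) := by
          rw [mul_rpow zero_le_two (by positivity), ← rpow_mul hv0.le, mul_neg,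
            mul_inv_cancel₀ hs.ne', rpow_neg_one]
      _ ≤ (v ^ s + A) ^ (-s⁻¹) :=
          rpow_le_rpow_of_nonpos (by positivity) (by linarith) (by simp [hs.le])
  calc 2 ^ (-s⁻¹) * (log T - s⁻¹ * log A)
        = ∫ v in A ^ s⁻¹..T, 2 ^ (-s⁻¹) * v⁻¹ := by
          rw [intervalIntegral.integral_const_mul, integral_inv_of_pos hv₀ hT,
            log_div hT.ne' hv₀.ne', hlog]
    _ ≤ ∫ v in A ^ s⁻¹..T, (v ^ s + A) ^ (-s⁻¹) :=
        integral_mono_on hTA ((intervalIntegrable_inv (fun v hv => by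
            rw [uIcc_of_le hTA] at hv; exact (hv₀.trans_le hv.1).ne') continuousOn_id).const_mul _)
          (intervalIntegrable_rpow_add hs hA hv₀.le (hv₀.le.trans hTA) _) hpt
    _ ≤ shiftedRpowIntegral s s⁻¹ T A := integral_le_shiftedRpowIntegral hs hA hv₀.le hTA le_rfl

end OneVariable

def doubleRpowIntegral (p q β T ε : ℝ) : ℝ :=
  ∫ u in (0 : ℝ)..T, ∫ v in (0 : ℝ)..T, (u ^ p + v ^ q + ε) ^ (-β)

section TwoVariables

variable {p q β T ε : ℝ}

lemma doubleRpowIntegral_eq (p q β T ε : ℝ) :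
    doubleRpowIntegral p q β T ε =
      ∫ u in (0 : ℝ)..T, shiftedRpowIntegral q β T (u ^ p + ε) := by
  unfold doubleRpowIntegral shiftedRpowIntegral
  congr 1; ext u; congr 1; ext v
  rw [add_comm (u ^ p), add_assoc]

lemma intervalIntegrable_shiftedRpowIntegral_comp (hp : 0 < p) (hq : 0 < q) (hT : 0 ≤ T)
    (hβ : 0 ≤ β) (hε : 0 < ε) {b : ℝ} (hb : 0 ≤ b) :
    IntervalIntegrable (fun u => shiftedRpowIntegral q β T (u ^ p + ε)) volume 0 b := by
  refine AntitoneOn.intervalIntegrable fun x hx y hy hxy => ?_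
  rw [uIcc_of_le hb] at hx hy
  exact antitoneOn_shiftedRpowIntegral hq hT hβ (mem_Ioi.2 (by have := hx.1; positivity))
    (mem_Ioi.2 (by have := hy.1; positivity)) (add_le_add_left (rpow_le_rpow hx.1 hxy hp.le) ε)

lemma doubleRpowIntegral_le_mul_shiftedRpowIntegral (hp : 0 < p) (hq : 0 < q) (hT : 0 ≤ T)
    (hε : 0 < ε) (hqβ : 1 < q * β) :
    doubleRpowIntegral p q β T ε ≤
      (1 + (q * β - 1)⁻¹) * shiftedRpowIntegral p (β - q⁻¹) T ε := by
  have hβ : 0 ≤ β := (pos_of_mul_pos_right (by linarith) hq.le).le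
  rw [doubleRpowIntegral_eq, shiftedRpowIntegral, ← intervalIntegral.integral_const_mul]
  refine integral_mono_on hT (intervalIntegrable_shiftedRpowIntegral_comp hp hq hT hβ hε hT)
    ((intervalIntegrable_rpow_add hp hε le_rfl hT _).const_mul _) fun u hu => ?_
  rw [neg_sub]
  exact shiftedRpowIntegral_le_of_one_lt hq (by have := hu.1; positivity) hT hqβ

lemma mul_shiftedRpowIntegral_le_doubleRpowIntegral {E : ℝ} (hp : 0 < p) (hq : 0 < q)
    (hT : 0 < T) (hε : 0 < ε) (hβ : 0 ≤ β) (hεE : ε ≤ E) :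
    min 1 (T * (T ^ p + E) ^ (-q⁻¹)) * 2 ^ (-β) * shiftedRpowIntegral p (β - q⁻¹) T ε ≤
      doubleRpowIntegral p q β T ε := by
  rw [doubleRpowIntegral_eq, shiftedRpowIntegral, ← intervalIntegral.integral_const_mul]
  refine integral_mono_on hT.le ((intervalIntegrable_rpow_add hp hε le_rfl hT.le _).const_mul _)
    (intervalIntegrable_shiftedRpowIntegral_comp hp hq hT.le hβ hε hT.le) fun u hu => ?_
  rw [neg_sub]
  exact mul_rpow_le_shiftedRpowIntegral hq (by have := hu.1; positivity) hT hβ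
    (add_le_add (rpow_le_rpow hu.1 hu.2 hp.le) hεE)

lemma mul_shiftedRpowIntegral_rpow_add_le_doubleRpowIntegral {E : ℝ} (hp : 0 < p) (hq : 0 < q)
    (hT : 0 < T) (hε : 0 < ε) (hβ : 0 ≤ β) (hεE : ε ≤ E) :
    T * shiftedRpowIntegral q β T (T ^ p + E) ≤ doubleRpowIntegral p q β T ε := by
  have hE : 0 < E := hε.trans_le hεE
  rw [doubleRpowIntegral_eq]
  simpa using integral_mono_on hT.le intervalIntegrable_const
    (intervalIntegrable_shiftedRpowIntegral_comp hp hq hT.le hβ hε hT.le) fun u hu =>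
      antitoneOn_shiftedRpowIntegral hq hT.le hβ (mem_Ioi.2 (by have := hu.1; positivity))
        (mem_Ioi.2 (by positivity)) (add_le_add (rpow_le_rpow hu.1 hu.2 hp.le) hεE)

lemma doubleRpowIntegral_le_sq (hp : 0 < p) (hq : 0 < q) (hT : 0 ≤ T) (hε : 0 < ε) (hβ : 0 ≤ β)
    (hlt : β < p⁻¹ + q⁻¹) :
    doubleRpowIntegral p q β T ε ≤
      (T ^ (1 - β / (p⁻¹ + q⁻¹)) / (1 - β / (p⁻¹ + q⁻¹))) ^ 2 := by
  set θ := β / (p⁻¹ + q⁻¹)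
  have hθ : 0 ≤ θ := by positivity
  have hθ1 : θ < 1 := (div_lt_one (by positivity)).2 hlt
  have hβθ : β = θ / p + θ / q := by simp only [θ]; field_simp
  have hI : ∀ {s : ℝ}, 0 < s → shiftedRpowIntegral s (θ / s) T ε ≤ T ^ (1 - θ) / (1 - θ) :=
    fun {s} hs => by
      simpa [mul_div_cancel₀ _ hs.ne'] using shiftedRpowIntegral_le_of_lt_one (γ := θ / s) hs hε hT
        (by positivity) (by rwa [mul_div_cancel₀ _ hs.ne'])
  rw [doubleRpowIntegral_eq]
  calc ∫ u in (0 : ℝ)..T, shiftedRpowIntegral q β T (u ^ p + ε)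
      ≤ ∫ u in (0 : ℝ)..T, (u ^ p + ε) ^ (-(θ / p)) * shiftedRpowIntegral q (θ / q) T ε := by
        refine integral_mono_on hT (intervalIntegrable_shiftedRpowIntegral_comp hp hq hT hβ hε hT)
          ((intervalIntegrable_rpow_add hp hε le_rfl hT _).mul_const _) fun u hu => ?_
        have hA : 0 < u ^ p + ε := by have := hu.1; positivity
        rw [hβθ]
        exact (shiftedRpowIntegral_add_le hq hA hT (by positivity)).trans
          (mul_le_mul_of_nonneg_left (antitoneOn_shiftedRpowIntegral hq hT (by positivity) hε hA
            (le_add_of_nonneg_left (rpow_nonneg hu.1 _))) (rpow_nonneg hA.le _))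
    _ = shiftedRpowIntegral p (θ / p) T ε * shiftedRpowIntegral q (θ / q) T ε :=
        intervalIntegral.integral_mul_const _ _
    _ ≤ (T ^ (1 - θ) / (1 - θ)) ^ 2 := by
        rw [sq]
        exact mul_le_mul (hI hp) (hI hq) (shiftedRpowIntegral_nonneg hT hε.le)
          (div_nonneg (rpow_nonneg hT _) (by linarith))

end TwoVariables

def ComparableOn (f g : ℝ → ℝ) (S : Set ℝ) : Prop :=
  ∃ c C : ℝ, 0 < c ∧ c ≤ C ∧ ∀ x ∈ S, c * g x ≤ f x ∧ f x ≤ C * g x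

namespace ComparableOn

variable {f g h : ℝ → ℝ} {S : Set ℝ}

lemma of_le {c C : ℝ} (hc : 0 < c) (hg : ∀ x ∈ S, 0 ≤ g x) (hlow : ∀ x ∈ S, c * g x ≤ f x)
    (hup : ∀ x ∈ S, f x ≤ C * g x) : ComparableOn f g S :=
  ⟨c, max c C, hc, le_max_left _ _, fun x hx =>
    ⟨hlow x hx, (hup x hx).trans (mul_le_mul_of_nonneg_right (le_max_right _ _) (hg x hx))⟩⟩

lemma trans (hfg : ComparableOn f g S) (hgh : ComparableOn g h S) : ComparableOn f h S := by
  obtain ⟨c₁, C₁, hc₁, hcC₁, h₁⟩ := hfg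
  obtain ⟨c₂, C₂, hc₂, hcC₂, h₂⟩ := hgh
  refine ⟨c₁ * c₂, C₁ * C₂, mul_pos hc₁ hc₂, mul_le_mul hcC₁ hcC₂ hc₂.le (hc₁.trans_le hcC₁).le,
    fun x hx => ⟨?_, ?_⟩⟩
  · calc c₁ * c₂ * h x = c₁ * (c₂ * h x) := mul_assoc _ _ _
      _ ≤ c₁ * g x := mul_le_mul_of_nonneg_left (h₂ x hx).1 hc₁.le
      _ ≤ f x := (h₁ x hx).1
  · calc f x ≤ C₁ * g x := (h₁ x hx).2
      _ ≤ C₁ * (C₂ * h x) := mul_le_mul_of_nonneg_left (h₂ x hx).2 (hc₁.le.trans hcC₁)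
      _ = C₁ * C₂ * h x := (mul_assoc _ _ _).symm

end ComparableOn

lemma log_one_add_rpow_neg_half_le {ε : ℝ} (hε : 0 < ε) :
    log (1 + ε ^ (-(1 : ℝ) / 2)) ≤ 1 + max 0 (-log ε) := by
  set x := ε ^ (-(1 : ℝ) / 2)
  have hx : 0 < x := rpow_pos_of_pos hε _
  have hlog2 : log 2 < 1 := by linarith [log_two_lt_d9]
  rcases le_total x 1 with h | h
  · calc log (1 + x) ≤ log 2 := log_le_log (by positivity) (by linarith)
      _ ≤ 1 + max 0 (-log ε) := by linarith [le_max_left 0 (-log ε)]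
  · have hlx : log x = -log ε / 2 := by rw [log_rpow hε]; ring
    have := log_nonneg h
    calc log (1 + x) ≤ log (2 * x) := log_le_log (by positivity) (by linarith)
      _ = log 2 + log x := log_mul two_ne_zero hx.ne'
      _ ≤ 1 + max 0 (-log ε) := by linarith [le_max_right 0 (-log ε)]

lemma one_add_max_neg_log_le {ε E : ℝ} (hε : 0 < ε) (hεE : ε ≤ E) :
    1 + max 0 (-log ε) ≤
      ((log (1 + E ^ (-(1 : ℝ) / 2)))⁻¹ + 2) * log (1 + ε ^ (-(1 : ℝ) / 2)) := by
  have hE : 0 < E := hε.trans_le hεE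
  have hLE : 0 < log (1 + E ^ (-(1 : ℝ) / 2)) :=
    log_pos (by linarith [rpow_pos_of_pos hE (-(1 : ℝ) / 2)])
  have hmono : log (1 + E ^ (-(1 : ℝ) / 2)) ≤ log (1 + ε ^ (-(1 : ℝ) / 2)) :=
    log_le_log (by positivity)
      (add_le_add_right (rpow_le_rpow_of_nonpos (z := -(1 : ℝ) / 2) hε hεE (by norm_num)) 1)
  have hneg : -log ε ≤ 2 * log (1 + ε ^ (-(1 : ℝ) / 2)) := by
    have := log_le_log (rpow_pos_of_pos hε (-(1 : ℝ) / 2)) (le_add_of_nonneg_left zero_le_one)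
    rw [log_rpow hε] at this
    linarith
  have h1 : 1 ≤ (log (1 + E ^ (-(1 : ℝ) / 2)))⁻¹ * log (1 + ε ^ (-(1 : ℝ) / 2)) := by
    rw [inv_mul_eq_div, one_le_div hLE]; exact hmono
  have : max 0 (-log ε) ≤ 2 * log (1 + ε ^ (-(1 : ℝ) / 2)) := max_le (by linarith) hneg
  rw [add_mul]
  linarith

lemma comparableOn_one_add_max_neg_log (E : ℝ) :
    ComparableOn (fun ε => 1 + max 0 (-log ε)) (fun ε => log (1 + ε ^ (-(1 : ℝ) / 2)))
      (Ioc 0 E) :=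
  ComparableOn.of_le one_pos
    (fun ε hε => log_nonneg (by linarith [rpow_pos_of_pos hε.1 (-(1 : ℝ) / 2)]))
    (fun ε hε => by simpa using log_one_add_rpow_neg_half_le hε.1)
    (fun ε hε => one_add_max_neg_log_le hε.1 hε.2)

lemma one_add_max_sub_le {k a y : ℝ} (ha : 0 ≤ a) :
    1 + max 0 (k - a * y) ≤ (1 + |k| + a) * (1 + max 0 (-y)) := by
  have hm : 0 ≤ max 0 (-y) := le_max_left _ _
  have hay : a * -y ≤ a * max 0 (-y) := mul_le_mul_of_nonneg_left (le_max_right _ _) ha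
  have : max 0 (k - a * y) ≤ |k| + a * max 0 (-y) :=
    max_le (by positivity) (by linarith [le_abs_self k])
  nlinarith [mul_nonneg (abs_nonneg k) hm]

lemma one_add_max_neg_le {a b k y J : ℝ} (ha : 0 < a) (hb : 0 < b) (hbJ : b ≤ J)
    (hJ : k - a * y ≤ J) : 1 + max 0 (-y) ≤ (b⁻¹ + (1 + |k| * b⁻¹) * a⁻¹) * J := by
  have hJ0 : 0 < J := hb.trans_le hbJ
  have h1 : 1 ≤ b⁻¹ * J := by rw [inv_mul_eq_div, one_le_div hb]; exact hbJ
  have hy : -y ≤ (1 + |k| * b⁻¹) * a⁻¹ * J := by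
    rw [mul_comm _ a⁻¹, mul_assoc, le_inv_mul_iff₀ ha]
    nlinarith [neg_abs_le k, mul_nonneg (abs_nonneg k) (sub_nonneg.2 h1)]
  have : max 0 (-y) ≤ (1 + |k| * b⁻¹) * a⁻¹ * J := max_le (by positivity) hy
  rw [add_mul]
  linarith

section Regimes

variable {p q β T E : ℝ}

lemma doubleRpowIntegral_comparableOn_of_lt (hp : 0 < p) (hq : 0 < q) (hT : 0 < T) (hE : 0 < E)
    (hlt : p⁻¹ + q⁻¹ < β) :
    ComparableOn (doubleRpowIntegral p q β T) (fun ε => ε ^ (p⁻¹ + q⁻¹ - β)) (Ioc 0 E) := by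
  have hβ : 0 ≤ β - q⁻¹ := by linarith [inv_pos.2 hp]
  have hqβ : 1 < q * β := (inv_lt_iff_one_lt_mul₀' hq).1 (by linarith [inv_pos.2 hp])
  have hpβ : 1 < p * (β - q⁻¹) := (inv_lt_iff_one_lt_mul₀' hp).1 (by linarith)
  have hexp : p⁻¹ + q⁻¹ - β = p⁻¹ - (β - q⁻¹) := by ring
  refine ComparableOn.of_le (C := (1 + (q * β - 1)⁻¹) * (1 + (p * (β - q⁻¹) - 1)⁻¹))
    (c := min 1 (T * (T ^ p + E) ^ (-q⁻¹)) * 2 ^ (-β) *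
      (min 1 (T * E ^ (-p⁻¹)) * 2 ^ (-(β - q⁻¹)))) (by positivity)
    (fun ε hε => rpow_nonneg hε.1.le _) (fun ε hε => ?_) (fun ε hε => ?_)
  · rw [hexp, mul_assoc]
    exact (mul_le_mul_of_nonneg_left (mul_rpow_le_shiftedRpowIntegral hp hε.1 hT hβ hε.2)
      (by positivity)).trans
      (mul_shiftedRpowIntegral_le_doubleRpowIntegral hp hq hT hε.1 (by linarith [inv_pos.2 hq])
        hε.2)
  · rw [hexp, mul_assoc]
    exact (doubleRpowIntegral_le_mul_shiftedRpowIntegral hp hq hT.le hε.1 hqβ).trans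
      (mul_le_mul_of_nonneg_left (shiftedRpowIntegral_le_of_one_lt hp hε.1 hT.le hpβ)
        (add_nonneg zero_le_one (inv_nonneg.2 (by linarith))))

lemma doubleRpowIntegral_comparableOn_of_eq (hp : 0 < p) (hq : 0 < q) (hT : 0 < T) (hE : 0 < E)
    (heq : p⁻¹ + q⁻¹ = β) :
    ComparableOn (doubleRpowIntegral p q β T) (fun ε => 1 + max 0 (-log ε)) (Ioc 0 E) := by
  have hβp : β - q⁻¹ = p⁻¹ := by linarith
  have hβ : 0 ≤ β := by rw [← heq]; positivity
  have hqβ : 1 < q * β := (inv_lt_iff_one_lt_mul₀' hq).1 (by linarith [inv_pos.2 hp])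
  set κ := min 1 (T * (T ^ p + E) ^ (-q⁻¹)) * 2 ^ (-β) * 2 ^ (-p⁻¹)
  have hκ : 0 < κ := by positivity
  set b := T * shiftedRpowIntegral q β T (T ^ p + E)
  have hb : 0 < b := mul_pos hT (shiftedRpowIntegral_pos hq (by positivity) hT hβ)
  refine ComparableOn.of_le (c := (b⁻¹ + (1 + |κ * log T| * b⁻¹) * (κ * p⁻¹)⁻¹)⁻¹)
    (C := (1 + (q * β - 1)⁻¹) * (1 + |log T| + p⁻¹)) (by positivity)
    (fun ε _ => by positivity) (fun ε hε => ?_) (fun ε hε => ?_)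
  · rw [inv_mul_le_iff₀ (by positivity)]
    refine one_add_max_neg_le (by positivity) hb
      (mul_shiftedRpowIntegral_rpow_add_le_doubleRpowIntegral hp hq hT hε.1 hβ hε.2) ?_
    calc κ * log T - κ * p⁻¹ * log ε
        = min 1 (T * (T ^ p + E) ^ (-q⁻¹)) * 2 ^ (-β) * (2 ^ (-p⁻¹) * (log T - p⁻¹ * log ε)) := by
          ring
      _ ≤ min 1 (T * (T ^ p + E) ^ (-q⁻¹)) * 2 ^ (-β) * shiftedRpowIntegral p p⁻¹ T ε :=
          mul_le_mul_of_nonneg_left (mul_log_le_shiftedRpowIntegral hp hε.1 hT) (by positivity)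
      _ ≤ doubleRpowIntegral p q β T ε := hβp ▸
          mul_shiftedRpowIntegral_le_doubleRpowIntegral hp hq hT hε.1 hβ hε.2
  · have hC : 0 ≤ 1 + (q * β - 1)⁻¹ := add_nonneg zero_le_one (inv_nonneg.2 (by linarith))
    calc doubleRpowIntegral p q β T ε
        ≤ (1 + (q * β - 1)⁻¹) * shiftedRpowIntegral p p⁻¹ T ε := hβp ▸
          doubleRpowIntegral_le_mul_shiftedRpowIntegral hp hq hT.le hε.1 hqβ
      _ ≤ (1 + (q * β - 1)⁻¹) * (1 + max 0 (log T - p⁻¹ * log ε)) :=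
          mul_le_mul_of_nonneg_left (shiftedRpowIntegral_inv_le hp hε.1 hT) hC
      _ ≤ (1 + (q * β - 1)⁻¹) * (1 + |log T| + p⁻¹) * (1 + max 0 (-log ε)) := by
          rw [mul_assoc]
          exact mul_le_mul_of_nonneg_left (one_add_max_sub_le (inv_nonneg.2 hp.le)) hC

lemma doubleRpowIntegral_comparableOn_of_gt (hp : 0 < p) (hq : 0 < q) (hT : 0 < T) (hE : 0 < E)
    (hβ : 0 ≤ β) (hgt : β < p⁻¹ + q⁻¹) :
    ComparableOn (doubleRpowIntegral p q β T) (fun _ => 1) (Ioc 0 E) :=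
  ComparableOn.of_le (mul_pos hT (shiftedRpowIntegral_pos hq (by positivity) hT hβ))
    (fun _ _ => zero_le_one)
    (fun ε hε => (mul_one _).trans_le
      (mul_shiftedRpowIntegral_rpow_add_le_doubleRpowIntegral hp hq hT hε.1 hβ hε.2))
    (fun ε hε => by simpa using doubleRpowIntegral_le_sq hp hq hT.le hε.1 hβ hgt)

theorem doubleRpowIntegral_asymptotics (hp : 0 < p) (hq : 0 < q) (hT : 0 < T) (hE : 0 < E)
    (hβ : 0 ≤ β) :
    ∃ c C : ℝ, 0 < c ∧ c ≤ C ∧ ∀ ε ∈ Ioc 0 E,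
      (p⁻¹ + q⁻¹ < β →
        c * ε ^ (p⁻¹ + q⁻¹ - β) ≤ doubleRpowIntegral p q β T ε ∧
          doubleRpowIntegral p q β T ε ≤ C * ε ^ (p⁻¹ + q⁻¹ - β)) ∧
      (p⁻¹ + q⁻¹ = β →
        c * log (1 + ε ^ (-(1 : ℝ) / 2)) ≤ doubleRpowIntegral p q β T ε ∧
          doubleRpowIntegral p q β T ε ≤ C * log (1 + ε ^ (-(1 : ℝ) / 2))) ∧
      (β < p⁻¹ + q⁻¹ → c ≤ doubleRpowIntegral p q β T ε ∧ doubleRpowIntegral p q β T ε ≤ C) := by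
  rcases lt_trichotomy (p⁻¹ + q⁻¹) β with h | h | h
  · obtain ⟨c, C, hc, hcC, hb⟩ := doubleRpowIntegral_comparableOn_of_lt hp hq hT hE h
    exact ⟨c, C, hc, hcC, fun ε hε =>
      ⟨fun _ => hb ε hε, fun h' => absurd h' h.ne, fun h' => absurd h' h.not_gt⟩⟩
  · obtain ⟨c, C, hc, hcC, hb⟩ := (doubleRpowIntegral_comparableOn_of_eq hp hq hT hE h).trans
      (comparableOn_one_add_max_neg_log E)
    exact ⟨c, C, hc, hcC, fun ε hε =>
      ⟨fun h' => absurd h h'.ne, fun _ => hb ε hε, fun h' => absurd h h'.ne'⟩⟩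
  · obtain ⟨c, C, hc, hcC, hb⟩ := doubleRpowIntegral_comparableOn_of_gt hp hq hT hE hβ h
    exact ⟨c, C, hc, hcC, fun ε hε =>
      ⟨fun h' => absurd h' h.not_gt, fun h' => absurd h' h.ne', fun _ => by simpa using hb ε hε⟩⟩

end Regimes

theorem stmt14_general
    (T : ℝ) (hT : 0 < T) (α : ℝ) (hα : 0 ≤ α)
    (H₁ H₂ : ℝ) (hH₁ : H₁ ∈ Set.Ioo (0 : ℝ) 1) (hH₂ : H₂ ∈ Set.Ioo (0 : ℝ) 1)
    (d : ℕ)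
    (J : ℝ → ℝ)
    (hJ : ∀ ε : ℝ, J ε =
      ∫ u in (0 : ℝ)..T, ∫ v in (0 : ℝ)..T,
        (u ^ (2 * H₁) + v ^ (2 * H₂) + ε) ^ (-(d : ℝ) / 2 - α)) :
    ∃ c C : ℝ, 0 < c ∧ c ≤ C ∧
      ∀ ε ∈ Set.Ioo (0 : ℝ) (T / 2),
        ((H₁ + H₂) / (H₁ * H₂) < d + 2 * α →
          c * ε ^ ((H₁ + H₂) / (2 * H₁ * H₂) - d / 2 - α) ≤ J ε ∧
            J ε ≤ C * ε ^ ((H₁ + H₂) / (2 * H₁ * H₂) - d / 2 - α)) ∧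
        ((H₁ + H₂) / (H₁ * H₂) = d + 2 * α →
          c * Real.log (1 + ε ^ (-(1 : ℝ) / 2)) ≤ J ε ∧
            J ε ≤ C * Real.log (1 + ε ^ (-(1 : ℝ) / 2))) ∧
        ((d : ℝ) + 2 * α < (H₁ + H₂) / (H₁ * H₂) →
          c ≤ J ε ∧ J ε ≤ C) := by
  have h₁ : H₁ ≠ 0 := hH₁.1.ne'
  have h₂ : H₂ ≠ 0 := hH₂.1.ne'
  obtain ⟨c, C, hc, hcC, h⟩ :=
    doubleRpowIntegral_asymptotics (p := 2 * H₁) (q := 2 * H₂) (β := d / 2 + α)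
    (by linarith [hH₁.1]) (by linarith [hH₂.1]) hT (half_pos hT) (by positivity)
  have hJε : ∀ ε, J ε = doubleRpowIntegral (2 * H₁) (2 * H₂) (d / 2 + α) T ε := fun ε => by
    rw [hJ, doubleRpowIntegral, neg_add', neg_div]
  have hratio : (H₁ + H₂) / (H₁ * H₂) = 2 * ((2 * H₁)⁻¹ + (2 * H₂)⁻¹) := by field_simp; ring
  have hexp : (H₁ + H₂) / (2 * H₁ * H₂) - d / 2 - α = (2 * H₁)⁻¹ + (2 * H₂)⁻¹ - (d / 2 + α) := by
    field_simp; ring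
  have hd : (d : ℝ) + 2 * α = 2 * (d / 2 + α) := by ring
  refine ⟨c, C, hc, hcC, fun ε hε => ?_⟩
  simp only [hJε, hratio, hexp, hd, mul_lt_mul_iff_right₀ two_pos,
    mul_right_inj' (two_ne_zero : (2 : ℝ) ≠ 0)]
  exact h ε ⟨hε.1, hε.2.le⟩

theorem stmt14
    (T : ℝ) (hT : 0 < T) (α : ℝ) (hα : 0 ≤ α)
    (H₁ H₂ : ℝ) (hH₁ : H₁ ∈ Set.Ioo (0 : ℝ) 1) (hH₂ : H₂ ∈ Set.Ioo (0 : ℝ) 1)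
    (d : ℕ) (hd : 1 ≤ d)
    (J : ℝ → ℝ)
    (hJ : ∀ ε : ℝ, J ε =
      ∫ u in (0 : ℝ)..T, ∫ v in (0 : ℝ)..T,
        (u ^ (2 * H₁) + v ^ (2 * H₂) + ε) ^ (-(d : ℝ) / 2 - α)) :
    ∃ c C : ℝ, 0 < c ∧ c ≤ C ∧
      ∀ ε ∈ Set.Ioo (0 : ℝ) (T / 2),
        ((H₁ + H₂) / (H₁ * H₂) < d + 2 * α →
          c * ε ^ ((H₁ + H₂) / (2 * H₁ * H₂) - d / 2 - α) ≤ J ε ∧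
            J ε ≤ C * ε ^ ((H₁ + H₂) / (2 * H₁ * H₂) - d / 2 - α)) ∧
        ((H₁ + H₂) / (H₁ * H₂) = d + 2 * α →
          c * Real.log (1 + ε ^ (-(1 : ℝ) / 2)) ≤ J ε ∧
            J ε ≤ C * Real.log (1 + ε ^ (-(1 : ℝ) / 2))) ∧
        ((d : ℝ) + 2 * α < (H₁ + H₂) / (H₁ * H₂) →
          c ≤ J ε ∧ J ε ≤ C) :=
  stmt14_general T hT α hα H₁ H₂ hH₁ hH₂ d J hJ

end
end

section
/- Let d≥1 and m≥1 be integers, let x₁,…,x_m ∈ ℝ^d, and set x_{m+1} = 0. Then Σ_{j=1}^m |x_j − x_{j+1}|² ≥ (2/(m(m+1))) · Σ_{j=1}^m |x_j|², where |·| is the Euclidean norm on ℝ^d. -/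
noncomputable section

/-!
Extend the sequence by `a m = 0`. Each `a j` telescopes into the `m - j` differences
`a k - a (k + 1)`, `j ≤ k < m`, so by Cauchy–Schwarz `a j ^ 2 ≤ (m - j) * D`, where `D` is the sum
of all squared differences. Summing over `j` gives `∑ a j ^ 2 ≤ (1 + ⋯ + m) * D = m (m + 1) / 2 * D`.
The vector statement follows coordinate by coordinate.
-/

open Finset

lemma sum_Ico_sub_succ_of_eq_zero {G : Type*} [AddCommGroup G] {a : ℕ → G} {j m : ℕ}
    (ham : a m = 0) (hjm : j ≤ m) : ∑ k ∈ Ico j m, (a k - a (k + 1)) = a j := by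
  rw [← neg_neg (∑ k ∈ Ico j m, _), ← sum_neg_distrib]
  simp only [neg_sub]
  rw [sum_Ico_sub _ hjm, ham, zero_sub, neg_neg]

lemma sum_range_sub_mul_two (m : ℕ) : (∑ j ∈ range m, (m - j)) * 2 = m * (m + 1) := by
  have hreflect : ∑ j ∈ range m, (m - j) = ∑ j ∈ range m, (j + 1) := by
    rw [← sum_range_reflect]
    exact sum_congr rfl fun j hj => by simp only [mem_range] at hj; omega
  rw [hreflect, ← add_zero (∑ j ∈ range m, (j + 1)), ← sum_range_succ' (fun j => j),
    sum_range_id_mul_two, Nat.add_sub_cancel, mul_comm]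

lemma sum_sq_le_mul_sum_sq_sub_succ (m : ℕ) (a : ℕ → ℝ) (ham : a m = 0) :
    ∑ j ∈ range m, a j ^ 2 ≤ m * (m + 1) / 2 * ∑ k ∈ range m, (a k - a (k + 1)) ^ 2 := by
  set D := ∑ k ∈ range m, (a k - a (k + 1)) ^ 2
  have hterm : ∀ j ∈ range m, a j ^ 2 ≤ ((m - j : ℕ) : ℝ) * D := fun j hj =>
    calc a j ^ 2 = (∑ k ∈ Ico j m, (a k - a (k + 1))) ^ 2 := by
          rw [sum_Ico_sub_succ_of_eq_zero ham (mem_range.1 hj).le]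
      _ ≤ #(Ico j m) * ∑ k ∈ Ico j m, (a k - a (k + 1)) ^ 2 := sq_sum_le_card_mul_sum_sq
      _ ≤ ((m - j : ℕ) : ℝ) * D := by
          rw [Nat.card_Ico]
          gcongr
          exact sum_le_sum_of_subset_of_nonneg (fun k hk => mem_range.2 (mem_Ico.1 hk).2)
            fun _ _ _ => sq_nonneg _
  calc ∑ j ∈ range m, a j ^ 2 ≤ ∑ j ∈ range m, ((m - j : ℕ) : ℝ) * D := sum_le_sum hterm
    _ = m * (m + 1) / 2 * D := by
      rw [← sum_mul, ← Nat.cast_sum]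
      congr 1
      rw [eq_div_iff two_ne_zero]
      exact_mod_cast sum_range_sub_mul_two m

lemma sum_sq_le_mul_sum_sq_sub_next (m : ℕ) (v : Fin m → ℝ) :
    ∑ j, v j ^ 2 ≤ m * (m + 1) / 2 *
      ∑ j : Fin m, (v j - if h : (j : ℕ) + 1 < m then v ⟨(j : ℕ) + 1, h⟩ else 0) ^ 2 := by
  let a : ℕ → ℝ := fun n => if h : n < m then v ⟨n, h⟩ else 0
  have hseq := sum_sq_le_mul_sum_sq_sub_succ m a (dif_neg (lt_irrefl m))
  rw [← Fin.sum_univ_eq_sum_range,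
    ← Fin.sum_univ_eq_sum_range (fun n => (a n - a (n + 1)) ^ 2)] at hseq
  convert hseq using 5 <;> simp [a]

theorem stmt15_general
    (d m : ℕ) (x : Fin m → Fin d → ℝ) :
    (2 / ((m : ℝ) * ((m : ℝ) + 1))) * ∑ j, ∑ i, (x j i) ^ 2
      ≤ ∑ j : Fin m, ∑ i,
          (x j i - (if h : (j : ℕ) + 1 < m then x ⟨(j : ℕ) + 1, h⟩ i else 0)) ^ 2 := by
  rw [← inv_div, sum_comm, mul_sum, sum_comm]
  refine sum_le_sum fun i _ => inv_mul_le_of_le_mul₀ (by positivity)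
    (sum_nonneg fun _ _ => sq_nonneg _) ?_
  convert sum_sq_le_mul_sum_sq_sub_next m (fun j => x j i) using 4

theorem stmt15
    (d m : ℕ) (hd : 1 ≤ d) (hm : 1 ≤ m) (x : Fin m → Fin d → ℝ) :
    (2 / ((m : ℝ) * ((m : ℝ) + 1))) * ∑ j, ∑ i, (x j i) ^ 2
      ≤ ∑ j : Fin m, ∑ i,
          (x j i - (if h : (j : ℕ) + 1 < m then x ⟨(j : ℕ) + 1, h⟩ i else 0)) ^ 2 :=
  stmt15_general d m x

end
end
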